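/- arXiv:2210.14694 — 8 statements merged into one kernel-verified Lean document; each statement's English description precedes it below -/
import Mathlib

section
/- Assume (C1)–(C3) with ν>0, and let φ_n be the shape function of the offspring generating function f_n. Then lim_{n→∞} sup_{s∈[0,1]} |φ_n(1) − φ_n(s)| / (1−f̄_n) = 0. -/
open Filter Topology

/-- Generating function of a distribution `p` on `ℕ`. -/
noncomputable def pgf (p : ℕ → ℝ) (s : ℝ) : ℝ := ∑' k : ℕ, p k * s ^ k

/-- Mean `f̄ = f'(1)` of a distribution `p` on `ℕ`. -/
noncomputable def pmean (p : ℕ → ℝ) : ℝ := ∑' k : ℕ, (k : ℝ) * p k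

/-- Second factorial moment `f''(1)` of a distribution `p` on `ℕ`. -/
noncomputable def pfac2 (p : ℕ → ℝ) : ℝ := ∑' k : ℕ, (k : ℝ) * ((k : ℝ) - 1) * p k

/-- Third factorial moment `f'''(1)` of a distribution `p` on `ℕ`. -/
noncomputable def pfac3 (p : ℕ → ℝ) : ℝ :=
  ∑' k : ℕ, (k : ℝ) * ((k : ℝ) - 1) * ((k : ℝ) - 2) * p k

/-- Composite generating function.  If `q i` denotes the offspring generating
function of generation `i + 1` (i.e. the paper's `f_{i+1}`), then
`compGF q j n = f_{j+1} ∘ ⋯ ∘ f_n` is the paper's `f_{j,n}`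
(with `compGF q j n = id` for `n ≤ j`). -/
def compGF (q : ℕ → ℝ → ℝ) (j : ℕ) : ℕ → ℝ → ℝ
  | 0 => fun s => s
  | n + 1 => fun s => if n + 1 ≤ j then s else compGF q j n (q n s)

/-- The shape function of a generating function with distribution `p`:
`φ(s) = 1/(1−f(s)) − 1/(f̄(1−s))` for `s ≠ 1`, and `φ(1) = f′′(1)/(2 f̄²)`. -/
noncomputable def shapeFun (p : ℕ → ℝ) (s : ℝ) : ℝ :=
  if s = 1 then pfac2 p / (2 * (pmean p) ^ 2)
  else 1 / (1 - pgf p s) - 1 / (pmean p * (1 - s))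

lemma sum_range_cast_id (k : ℕ) : ∑ j ∈ Finset.range k, (j:ℝ) = (k:ℝ)*((k:ℝ)-1)/2 := by
  induction k with
  | zero => simp
  | succ n ih => rw [Finset.sum_range_succ, ih]; push_cast; ring

lemma sum_range_cast_id2 (k : ℕ) :
    ∑ j ∈ Finset.range k, (j:ℝ)*((j:ℝ)-1)/2 = (k:ℝ)*((k:ℝ)-1)*((k:ℝ)-2)/6 := by
  induction k with
  | zero => simp
  | succ n ih => rw [Finset.sum_range_succ, ih]; push_cast; ring

lemma fac2_cast_nonneg (k : ℕ) : 0 ≤ (k:ℝ)*((k:ℝ)-1) := by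
  match k with
  | 0 => norm_num
  | (n+1) => push_cast; nlinarith [Nat.cast_nonneg (α := ℝ) n]

lemma fac3_cast_nonneg (k : ℕ) : 0 ≤ (k:ℝ)*((k:ℝ)-1)*((k:ℝ)-2) := by
  match k with
  | 0 => norm_num
  | 1 => norm_num
  | (n+2) =>
    have h : (0:ℝ) ≤ (n:ℝ) := Nat.cast_nonneg n
    push_cast
    nlinarith [h, mul_nonneg h h, mul_nonneg (mul_nonneg h h) h]

lemma shape_arith (m a b C B : ℝ) (hm : 3/4 ≤ m) (hm1 : m ≤ 1) (ha : a ≤ 1/2)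
    (ha0 : 0 ≤ a) (hb0 : 0 ≤ b) (hB0 : 0 ≤ B) (hF4 : B ≤ a/2) (hF5 : a/2 - B ≤ b/6)
    (hCm : C ≤ m) (hCg : m - a/2 ≤ C) :
    |a / (2 * m ^ 2) - B / (m * C)| ≤ 2/3 * b + a ^ 2 := by
  have hC_half : (1:ℝ)/2 ≤ C := by linarith
  have hm_pos : (0:ℝ) < m := by linarith
  have hC_pos : (0:ℝ) < C := by linarith
  have hD : a / (2 * m ^ 2) - B / (m * C) = (a * C - 2 * m * B) / (2 * m ^ 2 * C) := by
    have hmne : m ≠ 0 := ne_of_gt hm_pos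
    have hCne : C ≠ 0 := ne_of_gt hC_pos
    field_simp
  rw [hD]
  have hden : (9:ℝ)/16 ≤ 2 * m ^ 2 * C := by nlinarith
  have hdenpos : (0:ℝ) < 2 * m ^ 2 * C := by linarith
  have hub : a * C - 2 * m * B ≤ b / 3 := by
    nlinarith [mul_nonneg ha0 (by linarith : (0:ℝ) ≤ m - C),
      mul_nonneg (by linarith : (0:ℝ) ≤ 1 - m) (by linarith : (0:ℝ) ≤ a/2 - B)]
  have hlb : -(a^2/2) ≤ a * C - 2 * m * B := by
    nlinarith [mul_le_mul_of_nonneg_left (by linarith : m - C ≤ a/2) ha0,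
      mul_nonneg hm_pos.le (by linarith : (0:ℝ) ≤ a/2 - B)]
  rw [abs_div, abs_of_pos hdenpos, div_le_iff₀ hdenpos]
  have habs : |a * C - 2 * m * B| ≤ b / 3 + a^2/2 := by
    rw [abs_le]
    constructor <;> nlinarith [sq_nonneg a]
  have hZ0 : (0:ℝ) ≤ 2/3 * b + a ^ 2 := by nlinarith [sq_nonneg a]
  have step1 : b / 3 + a^2/2 ≤ (2/3 * b + a ^ 2) * (9/16) := by linarith [sq_nonneg a]
  calc |a * C - 2 * m * B| ≤ b / 3 + a^2/2 := habs
    _ ≤ (2/3 * b + a ^ 2) * (9/16) := step1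
    _ ≤ (2/3 * b + a ^ 2) * (2 * m ^ 2 * C) := mul_le_mul_of_nonneg_left hden hZ0

lemma shape_bound (p : ℕ → ℝ) (hp0 : ∀ k, 0 ≤ p k) (hp1 : (∑' k : ℕ, p k) = 1)
    (h1 : Summable fun k : ℕ => (k : ℝ) * p k)
    (h2 : Summable fun k : ℕ => (k : ℝ) * ((k : ℝ) - 1) * p k)
    (h3 : Summable fun k : ℕ => (k : ℝ) * ((k : ℝ) - 1) * ((k : ℝ) - 2) * p k)
    (hm : 3/4 ≤ pmean p) (hm1 : pmean p < 1) (ha : pfac2 p ≤ 1/2)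
    {s : ℝ} (hs0 : 0 ≤ s) (hs1 : s ≤ 1) :
    |shapeFun p 1 - shapeFun p s| ≤ 2/3 * pfac3 p + (pfac2 p)^2 := by
  have ha0 : 0 ≤ pfac2 p := tsum_nonneg fun k => mul_nonneg (fac2_cast_nonneg k) (hp0 k)
  have hb0 : 0 ≤ pfac3 p := tsum_nonneg fun k => mul_nonneg (fac3_cast_nonneg k) (hp0 k)
  rcases eq_or_lt_of_le hs1 with heq | hs1'
  · subst heq
    simp only [sub_self, abs_zero]
    nlinarith [sq_nonneg (pfac2 p)]
  -- s < 1
  have h1s : 0 < 1 - s := by linarith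
  have hps : Summable p := by
    by_contra h
    rw [tsum_eq_zero_of_not_summable h] at hp1; norm_num at hp1
  have hpow1 : ∀ j : ℕ, s ^ j ≤ 1 := fun j => pow_le_one₀ hs0 hs1
  have hpow0 : ∀ j : ℕ, 0 ≤ s ^ j := fun j => pow_nonneg hs0 j
  have hsum_pow_le : ∀ k : ℕ, ∑ j ∈ Finset.range k, s ^ j ≤ (k:ℝ) := fun k => by
    calc ∑ j ∈ Finset.range k, s ^ j ≤ ∑ _j ∈ Finset.range k, (1:ℝ) :=
          Finset.sum_le_sum fun j _ => hpow1 j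
      _ = (k:ℝ) := by simp
  have hsum_pow_nn : ∀ k : ℕ, 0 ≤ ∑ j ∈ Finset.range k, s ^ j := fun k =>
    Finset.sum_nonneg fun j _ => hpow0 j
  have hdd_le : ∀ k : ℕ, ∑ j ∈ Finset.range k, ∑ i ∈ Finset.range j, s ^ i
      ≤ (k:ℝ)*((k:ℝ)-1)/2 := fun k => by
    calc ∑ j ∈ Finset.range k, ∑ i ∈ Finset.range j, s ^ i
        ≤ ∑ j ∈ Finset.range k, (j:ℝ) := Finset.sum_le_sum fun j _ => hsum_pow_le j
      _ = (k:ℝ)*((k:ℝ)-1)/2 := sum_range_cast_id k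
  have hdd_nn : ∀ k : ℕ, 0 ≤ ∑ j ∈ Finset.range k, ∑ i ∈ Finset.range j, s ^ i := fun k =>
    Finset.sum_nonneg fun j _ => Finset.sum_nonneg fun i _ => hpow0 i
  -- summabilities
  have hsF : Summable (fun k : ℕ => p k * s ^ k) :=
    Summable.of_nonneg_of_le (fun k => mul_nonneg (hp0 k) (hpow0 k))
      (fun k => mul_le_of_le_one_right (hp0 k) (hpow1 k)) hps
  have hsC : Summable (fun k : ℕ => p k * ∑ j ∈ Finset.range k, s ^ j) :=
    Summable.of_nonneg_of_le (fun k => mul_nonneg (hp0 k) (hsum_pow_nn k))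
      (fun k => by
        calc p k * ∑ j ∈ Finset.range k, s ^ j ≤ p k * (k:ℝ) :=
              mul_le_mul_of_nonneg_left (hsum_pow_le k) (hp0 k)
          _ = (k:ℝ) * p k := mul_comm _ _) h1
  have hsB : Summable (fun k : ℕ => p k * ∑ j ∈ Finset.range k, ∑ i ∈ Finset.range j, s ^ i) :=
    Summable.of_nonneg_of_le (fun k => mul_nonneg (hp0 k) (hdd_nn k))
      (fun k => by
        have h := mul_le_mul_of_nonneg_left (hdd_le k) (hp0 k)
        nlinarith [mul_nonneg (fac2_cast_nonneg k) (hp0 k)]) h2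
  have h2' : Summable (fun k : ℕ => p k * ((k:ℝ)*((k:ℝ)-1)/2)) :=
    (h2.mul_left (1/2)).congr (fun k => by ring)
  have h3' : Summable (fun k : ℕ => p k * ((1-s) * ((k:ℝ)*((k:ℝ)-1)*((k:ℝ)-2)/6))) :=
    (h3.mul_left ((1-s)/6)).congr (fun k => by ring)
  set Cv := ∑' k : ℕ, p k * ∑ j ∈ Finset.range k, s ^ j with hCvdef
  set Bv := ∑' k : ℕ, p k * ∑ j ∈ Finset.range k, ∑ i ∈ Finset.range j, s ^ i with hBvdef
  -- geometric identity
  have hgeo : ∀ n : ℕ, (1 - s) * ∑ i ∈ Finset.range n, s ^ i = 1 - s ^ n := fun n => by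
    have h := geom_sum_mul s n
    calc (1 - s) * ∑ i ∈ Finset.range n, s ^ i
        = -((∑ i ∈ Finset.range n, s ^ i) * (s - 1)) := by ring
      _ = -(s ^ n - 1) := by rw [h]
      _ = 1 - s ^ n := by ring
  -- identity (A): 1 - f(s) = (1-s) * Cv
  have hCeq : 1 - pgf p s = (1 - s) * Cv := by
    rw [hCvdef, ← tsum_mul_left]
    have e : ∀ k : ℕ, (1-s) * (p k * ∑ j ∈ Finset.range k, s^j) = p k - p k * s^k := fun k => by
      rw [mul_left_comm, hgeo k]; ring
    rw [tsum_congr e, Summable.tsum_sub hps hsF, hp1, pgf]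
  -- identity (B): m - Cv = (1-s) * Bv
  have hBeq : pmean p - Cv = (1 - s) * Bv := by
    rw [hBvdef, ← tsum_mul_left]
    have e : ∀ k : ℕ, (1-s) * (p k * ∑ j ∈ Finset.range k, ∑ i ∈ Finset.range j, s^i)
        = (k:ℝ) * p k - p k * ∑ j ∈ Finset.range k, s^j := fun k => by
      have e1 : (1-s) * ∑ j ∈ Finset.range k, ∑ i ∈ Finset.range j, s^i
          = ∑ j ∈ Finset.range k, (1 - s^j) := by
        rw [Finset.mul_sum]; exact Finset.sum_congr rfl fun j _ => hgeo j
      have e2 : ∑ j ∈ Finset.range k, (1 - s^j) = (k:ℝ) - ∑ j ∈ Finset.range k, s^j := by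
        rw [Finset.sum_sub_distrib]; simp
      rw [mul_left_comm, e1, e2]; ring
    rw [tsum_congr e, Summable.tsum_sub h1 hsC, pmean]
  have hBnn : 0 ≤ Bv := tsum_nonneg fun k => mul_nonneg (hp0 k) (hdd_nn k)
  have hhalf_eq : ∑' k : ℕ, p k * ((k:ℝ)*((k:ℝ)-1)/2) = pfac2 p / 2 := by
    calc ∑' k : ℕ, p k * ((k:ℝ)*((k:ℝ)-1)/2)
        = ∑' k : ℕ, (1/2) * ((k:ℝ)*((k:ℝ)-1) * p k) := tsum_congr fun k => by ring
      _ = (1/2) * pfac2 p := tsum_mul_left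
      _ = pfac2 p / 2 := by ring
  -- F4 : Bv ≤ a/2
  have hF4 : Bv ≤ pfac2 p / 2 := by
    rw [← hhalf_eq, hBvdef]
    exact Summable.tsum_le_tsum (fun k => mul_le_mul_of_nonneg_left (hdd_le k) (hp0 k)) hsB h2'
  -- inner estimate for F5
  have hinner : ∀ k : ℕ, (k:ℝ)*((k:ℝ)-1)/2 - ∑ j ∈ Finset.range k, ∑ i ∈ Finset.range j, s^i
      ≤ (1-s) * ((k:ℝ)*((k:ℝ)-1)*((k:ℝ)-2)/6) := fun k => by
    rw [← sum_range_cast_id k, ← sum_range_cast_id2 k, ← Finset.sum_sub_distrib,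
      Finset.mul_sum]
    apply Finset.sum_le_sum
    intro j _
    have e1 : (j:ℝ) - ∑ i ∈ Finset.range j, s^i = ∑ i ∈ Finset.range j, (1 - s^i) := by
      rw [Finset.sum_sub_distrib]; simp
    rw [e1, ← sum_range_cast_id j, Finset.mul_sum]
    apply Finset.sum_le_sum
    intro i _
    rw [← hgeo i]
    exact mul_le_mul_of_nonneg_left (hsum_pow_le i) h1s.le
  have hsixth_eq : ∑' k : ℕ, p k * ((1-s) * ((k:ℝ)*((k:ℝ)-1)*((k:ℝ)-2)/6))
      = (1-s) * pfac3 p / 6 := by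
    calc ∑' k : ℕ, p k * ((1-s) * ((k:ℝ)*((k:ℝ)-1)*((k:ℝ)-2)/6))
        = ∑' k : ℕ, ((1-s)/6) * ((k:ℝ)*((k:ℝ)-1)*((k:ℝ)-2) * p k) := tsum_congr fun k => by ring
      _ = ((1-s)/6) * pfac3 p := tsum_mul_left
      _ = (1-s) * pfac3 p / 6 := by ring
  -- F5 : a/2 - Bv ≤ (1-s) b/6
  have hF5 : pfac2 p / 2 - Bv ≤ (1-s) * pfac3 p / 6 := by
    have hsub : pfac2 p / 2 - Bv
        = ∑' k : ℕ, (p k * ((k:ℝ)*((k:ℝ)-1)/2)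
            - p k * ∑ j ∈ Finset.range k, ∑ i ∈ Finset.range j, s^i) := by
      rw [Summable.tsum_sub h2' hsB, hhalf_eq, hBvdef]
    rw [hsub, ← hsixth_eq]
    apply Summable.tsum_le_tsum _ (h2'.sub hsB) h3'
    intro k
    have h := mul_le_mul_of_nonneg_left (hinner k) (hp0 k)
    rw [mul_sub] at h
    linarith
  clear_value Cv Bv
  have hF5' : pfac2 p / 2 - Bv ≤ pfac3 p / 6 := by
    nlinarith [mul_nonneg hs0 hb0]
  -- C bounds
  have hC_le_m : Cv ≤ pmean p := by nlinarith [mul_nonneg h1s.le hBnn]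
  have hC_ge : pmean p - pfac2 p / 2 ≤ Cv := by
    nlinarith [mul_nonneg hs0 hBnn]
  have hC_half : 1/2 ≤ Cv := by linarith
  have hm_pos : (0:ℝ) < pmean p := by linarith
  have hC_pos : (0:ℝ) < Cv := by linarith
  have hmne : pmean p ≠ 0 := ne_of_gt hm_pos
  have hCne : Cv ≠ 0 := ne_of_gt hC_pos
  have hsne : (1:ℝ) - s ≠ 0 := ne_of_gt h1s
  -- shape function values
  have hphi1 : shapeFun p 1 = pfac2 p / (2 * (pmean p)^2) := by
    rw [shapeFun, if_pos rfl]
  have hphis : shapeFun p s = Bv / (pmean p * Cv) := by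
    rw [shapeFun, if_neg (ne_of_lt hs1'), hCeq]
    have e1 : 1/((1-s)*Cv) - 1/(pmean p*(1-s)) = (pmean p - Cv)/((1-s)*(pmean p*Cv)) := by
      field_simp
    rw [e1, hBeq, mul_div_mul_left _ _ hsne]
  rw [hphi1, hphis]
  exact shape_arith (pmean p) (pfac2 p) (pfac3 p) Cv Bv hm hm1.le ha ha0 hb0 hBnn hF4
    (by linarith) hC_le_m (by linarith)

/-- Under (C1)–(C3) with `ν > 0`,
`lim_{n→∞} sup_{s ∈ [0,1]} |φ_n(1) − φ_n(s)|/(1 − f̄_n) = 0`, where `φ_n` is the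
shape function of the offspring generating function `f_n`.
Here `p n` is the offspring distribution of generation `n+1`. -/
theorem shape_function_uniform_limit
    (p : ℕ → ℕ → ℝ) (ν : ℝ)
    (hp0 : ∀ n k, 0 ≤ p n k)
    (hp1 : ∀ n, (∑' k : ℕ, p n k) = 1)
    (hsum1 : ∀ n, Summable fun k : ℕ => (k : ℝ) * p n k)
    (hsum2 : ∀ n, Summable fun k : ℕ => (k : ℝ) * ((k : ℝ) - 1) * p n k)
    (hsum3 : ∀ n, Summable fun k : ℕ => (k : ℝ) * ((k : ℝ) - 1) * ((k : ℝ) - 2) * p n k)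
    -- (C1)
    (hC1a : ∀ n, pmean (p n) < 1)
    (hC1b : Tendsto (fun n => pmean (p n)) atTop (𝓝 1))
    (hC1c : ¬ Summable fun n => 1 - pmean (p n))
    -- (C2) with ν > 0
    (hν : 0 < ν)
    (hC2 : Tendsto (fun n => pfac2 (p n) / (1 - pmean (p n))) atTop (𝓝 ν))
    -- (C3)
    (hC3 : Tendsto (fun n => pfac3 (p n) / (1 - pmean (p n))) atTop (𝓝 0)) :
    ∀ ε > (0 : ℝ), ∀ᶠ n in atTop, ∀ s ∈ Set.Icc (0 : ℝ) 1,
      |shapeFun (p n) 1 - shapeFun (p n) s| / (1 - pmean (p n)) < ε := by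
  intro ε hε
  have h1m : ∀ n, 0 < 1 - pmean (p n) := fun n => by linarith [hC1a n]
  have hz : Tendsto (fun n => 1 - pmean (p n)) atTop (𝓝 0) := by
    have h := (tendsto_const_nhds (x := (1:ℝ)) (f := atTop)).sub hC1b
    simpa using h
  have ha_to : Tendsto (fun n => pfac2 (p n)) atTop (𝓝 0) := by
    have h := hC2.mul hz
    have e : (fun n => pfac2 (p n) / (1 - pmean (p n)) * (1 - pmean (p n)))
        = fun n => pfac2 (p n) := by
      funext n
      exact div_mul_cancel₀ _ (ne_of_gt (h1m n))
    rw [e] at h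
    simpa using h
  have hE : Tendsto (fun n => 2/3 * (pfac3 (p n) / (1 - pmean (p n)))
      + pfac2 (p n) / (1 - pmean (p n)) * pfac2 (p n)) atTop (𝓝 0) := by
    have h := (hC3.const_mul (2/3 : ℝ)).add (hC2.mul ha_to)
    simpa using h
  have hev1 : ∀ᶠ n in atTop, 3/4 < pmean (p n) :=
    hC1b.eventually_const_lt (by norm_num)
  have hev2 : ∀ᶠ n in atTop, pfac2 (p n) < 1/2 :=
    ha_to.eventually_lt_const (by norm_num)
  have hev3 : ∀ᶠ n in atTop, 2/3 * (pfac3 (p n) / (1 - pmean (p n)))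
      + pfac2 (p n) / (1 - pmean (p n)) * pfac2 (p n) < ε :=
    hE.eventually_lt_const hε
  filter_upwards [hev1, hev2, hev3] with n h34 h12 hEn
  intro s hs
  have hb := shape_bound (p n) (hp0 n) (hp1 n) (hsum1 n) (hsum2 n) (hsum3 n)
    h34.le (hC1a n) h12.le hs.1 hs.2
  rw [div_lt_iff₀ (h1m n)]
  have hEmul : (2/3 * (pfac3 (p n) / (1 - pmean (p n)))
        + pfac2 (p n) / (1 - pmean (p n)) * pfac2 (p n)) * (1 - pmean (p n))
      = 2/3 * pfac3 (p n) + (pfac2 (p n))^2 := by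
    have hne := ne_of_gt (h1m n)
    have e1 : pfac3 (p n) / (1 - pmean (p n)) * (1 - pmean (p n)) = pfac3 (p n) :=
      div_mul_cancel₀ _ hne
    have e2 : pfac2 (p n) / (1 - pmean (p n)) * (1 - pmean (p n)) = pfac2 (p n) :=
      div_mul_cancel₀ _ hne
    calc (2/3 * (pfac3 (p n) / (1 - pmean (p n)))
          + pfac2 (p n) / (1 - pmean (p n)) * pfac2 (p n)) * (1 - pmean (p n))
        = 2/3 * (pfac3 (p n) / (1 - pmean (p n)) * (1 - pmean (p n)))
          + (pfac2 (p n) / (1 - pmean (p n)) * (1 - pmean (p n))) * pfac2 (p n) := by ring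
      _ = 2/3 * pfac3 (p n) + (pfac2 (p n))^2 := by rw [e1, e2]; ring
  have hlt := mul_lt_mul_of_pos_right hEn (h1m n)
  rw [hEmul] at hlt
  linarith
end

section
/- For every real number x and every integer k≥1, ∑_{i=1}^{k−1} C(k−1,i) (−1)^i ((1+x)^i − 1)/i = ∑_{i=1}^{k−1} (−1)^i x^i / i, where C(k−1,i) denotes the binomial coefficient. -/
lemma binsum (n : ℕ) (y : ℝ) :
    ∑ i ∈ Finset.range (n+2), ((n+1).choose i : ℝ) * y^i = (y+1)^(n+1) := by
  rw [add_pow]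
  apply Finset.sum_congr rfl
  intro i hi
  simp [mul_comm]

lemma key (n : ℕ) (x : ℝ) :
    ∑ i ∈ Finset.Ico 1 (n+2), (n.choose (i-1) : ℝ) * (-1)^i * ((1+x)^i - 1) / i
      = (-1)^(n+1) * x^(n+1) / (n+1) := by
  have h1 : ∑ i ∈ Finset.Ico 1 (n+2), (n.choose (i-1) : ℝ) * (-1)^i * ((1+x)^i - 1) / i
      = ∑ i ∈ Finset.Ico 1 (n+2), ((n+1).choose i : ℝ) * ((-(1+x))^i - (-1)^i) / (n+1) := by
    apply Finset.sum_congr rfl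
    intro i hi
    simp only [Finset.mem_Ico] at hi
    obtain ⟨h1i, h2i⟩ := hi
    have hch : (n+1) * n.choose (i-1) = (n+1).choose i * i := by
      have := Nat.add_one_mul_choose_eq n (i-1)
      have hip : i - 1 + 1 = i := Nat.succ_pred_eq_of_pos h1i
      rw [hip] at this
      exact this
    have hchR : ((n:ℝ)+1) * (n.choose (i-1) : ℝ) = ((n+1).choose i : ℝ) * i := by
      exact_mod_cast hch
    have hi0 : (i:ℝ) ≠ 0 := Nat.cast_ne_zero.mpr (by omega)
    have hn0 : ((n:ℝ)+1) ≠ 0 := by positivity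
    have hneg : (-(1+x))^i = (-1)^i * (1+x)^i := by rw [neg_pow]
    rw [hneg, div_eq_div_iff hi0 hn0]
    linear_combination ((-1:ℝ)^i * ((1+x)^i - 1)) * hchR
  rw [h1, ← Finset.sum_div]
  have h2 : ∑ i ∈ Finset.range (n+2), ((n+1).choose i : ℝ) * ((-(1+x))^i - (-1)^i)
      = ∑ i ∈ Finset.Ico 1 (n+2), ((n+1).choose i : ℝ) * ((-(1+x))^i - (-1)^i) := by
    rw [Finset.range_eq_Ico, Finset.sum_eq_sum_Ico_succ_bot (show 0 < n+2 by omega)]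
    simp
  have h3 : ∑ i ∈ Finset.range (n+2), ((n+1).choose i : ℝ) * ((-(1+x))^i - (-1)^i)
      = (-(1+x)+1)^(n+1) - (-1+1)^(n+1) := by
    rw [← binsum, ← binsum, ← Finset.sum_sub_distrib]
    apply Finset.sum_congr rfl
    intro i _
    ring
  rw [← h2, h3]
  have e1 : (-(1+x)+1 : ℝ) = -x := by ring
  have e2 : (-1+1 : ℝ) = 0 := by ring
  rw [e1, e2, zero_pow (by omega), neg_pow]
  ring

/-- For every real `x` and every integer `k ≥ 1`,
`∑_{i=1}^{k−1} C(k−1,i) (−1)^i ((1+x)^i − 1)/i = ∑_{i=1}^{k−1} (−1)^i x^i / i`. -/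
theorem alternating_binomial_sum_identity (x : ℝ) (k : ℕ) (hk : 1 ≤ k) :
    ∑ i ∈ Finset.Ico 1 k,
        ((k - 1).choose i : ℝ) * (-1 : ℝ) ^ i * ((1 + x) ^ i - 1) / (i : ℝ) =
      ∑ i ∈ Finset.Ico 1 k, (-1 : ℝ) ^ i * x ^ i / (i : ℝ) := by
  induction k, hk using Nat.le_induction with
  | base => simp
  | succ n hn ih =>
    obtain ⟨m, rfl⟩ : ∃ m, n = m + 1 := ⟨n - 1, by omega⟩
    have hsub : m + 1 + 1 - 1 = m + 1 := by omega
    have hsub2 : m + 1 - 1 = m := by omega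
    rw [hsub2] at ih
    rw [hsub]
    have split : ∀ i ∈ Finset.Ico 1 (m+2),
        ((m+1).choose i : ℝ) * (-1:ℝ)^i * ((1+x)^i - 1) / i
          = (m.choose i : ℝ) * (-1:ℝ)^i * ((1+x)^i - 1) / i
            + (m.choose (i-1) : ℝ) * (-1:ℝ)^i * ((1+x)^i - 1) / i := by
      intro i hi
      simp only [Finset.mem_Ico] at hi
      obtain ⟨j, rfl⟩ : ∃ j, i = j + 1 := ⟨i - 1, by omega⟩
      have : (m+1).choose (j+1) = m.choose (j+1) + m.choose j := by
        rw [Nat.choose_succ_succ]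
        exact Nat.add_comm _ _
      rw [this]
      simp only [Nat.add_sub_cancel]
      push_cast
      ring
    rw [Finset.sum_congr rfl split, Finset.sum_add_distrib]
    have hA : ∑ i ∈ Finset.Ico 1 (m+2), (m.choose i : ℝ) * (-1:ℝ)^i * ((1+x)^i - 1) / i
        = ∑ i ∈ Finset.Ico 1 (m+1), (m.choose i : ℝ) * (-1:ℝ)^i * ((1+x)^i - 1) / i := by
      rw [Finset.sum_Ico_succ_top (by omega)]
      simp [Nat.choose_eq_zero_of_lt (by omega : m < m + 1)]
    rw [hA, ih, key m x, Finset.sum_Ico_succ_top (by omega : 1 ≤ m + 1)]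
    push_cast
    ring
end

section
/- For all integers L≥1 and n≥1 and every real number x, ∑_{j=1}^{L} ∑_{ℓ=1}^{j} (−1)^{ℓ+j} C(L+n, j+n) C(j−ℓ+n−1, n−1) x^ℓ = (1+x)^L − 1, where C(·,·) denotes the binomial coefficient. -/
open Finset

/-- Auxiliary alternating sum. -/
noncomputable def auxF (n N K : ℕ) : ℝ :=
  ∑ m ∈ Finset.range (K + 1),
    (-1 : ℝ) ^ m * ((m + n - 1).choose m : ℝ) * ((N.choose (K - m)) : ℝ)

lemma auxF_zero (N K : ℕ) : auxF 0 N K = (N.choose K : ℝ) := by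
  unfold auxF
  rw [Finset.sum_eq_single 0]
  · simp
  · intro m hm hm0
    have h : (m + 0 - 1).choose m = 0 := by
      apply Nat.choose_eq_zero_of_lt; omega
    rw [h]; simp
  · intro h; simp at h

lemma auxF_succ (n N K : ℕ) :
    auxF (n + 1) N (K + 1) + auxF (n + 1) N K = auxF n N (K + 1) := by
  unfold auxF
  rw [Finset.sum_range_succ' (fun m => (-1 : ℝ) ^ m * ((m + (n+1) - 1).choose m : ℝ) *
        ((N.choose (K + 1 - m)) : ℝ)) (K + 1),
      Finset.sum_range_succ' (fun m => (-1 : ℝ) ^ m * ((m + n - 1).choose m : ℝ) *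
        ((N.choose (K + 1 - m)) : ℝ)) (K + 1)]
  have h0 : ((0 + (n+1) - 1).choose 0 : ℝ) = ((0 + n - 1).choose 0 : ℝ) := by simp
  rw [add_right_comm]
  congr 1
  · rw [← Finset.sum_add_distrib]
    apply Finset.sum_congr rfl
    intro m hm
    have e1 : m + 1 + (n + 1) - 1 = m + n + 1 := by omega
    have e2 : m + 1 + n - 1 = m + n := by omega
    have e3 : m + (n + 1) - 1 = m + n := by omega
    have e4 : K + 1 - (m + 1) = K - m := by omega
    rw [e1, e2, e3, e4, Nat.choose_succ_succ']
    push_cast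
    ring
  · simp

lemma auxF_eq (n : ℕ) : ∀ L K : ℕ, auxF n (L + n) K = (L.choose K : ℝ) := by
  induction n with
  | zero => intro L K; simpa using auxF_zero L K
  | succ n ih =>
    intro L K
    induction K with
    | zero => unfold auxF; simp
    | succ K ihK =>
      have h := auxF_succ n (L + (n + 1)) K
      have h2 : auxF n (L + (n + 1)) (K + 1) = ((L + 1).choose (K + 1) : ℝ) := by
        have : L + (n + 1) = (L + 1) + n := by omega
        rw [this, ih (L + 1) (K + 1)]
      have : auxF (n + 1) (L + (n + 1)) (K + 1)
          = ((L + 1).choose (K + 1) : ℝ) - (L.choose K : ℝ) := by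
        rw [← h2, ← h, ihK]; ring
      rw [this, Nat.choose_succ_succ']
      push_cast; ring

lemma inner_sum_aux (L n l : ℕ) (hn : 1 ≤ n) (hl : 1 ≤ l) (hlL : l ≤ L) :
    ∑ j ∈ Finset.Icc l L,
        (-1 : ℝ) ^ (l + j) * ((L + n).choose (j + n) : ℝ) *
          ((j - l + n - 1).choose (n - 1) : ℝ)
      = (L.choose l : ℝ) := by
  have key : ∑ j ∈ Finset.Icc l L,
        (-1 : ℝ) ^ (l + j) * ((L + n).choose (j + n) : ℝ) *
          ((j - l + n - 1).choose (n - 1) : ℝ)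
      = auxF n (L + n) (L - l) := by
    unfold auxF
    apply Finset.sum_nbij' (fun j => j - l) (fun m => l + m)
    · intro j hj; simp only [Finset.mem_Icc] at hj; simp only [Finset.mem_range]; omega
    · intro m hm; simp only [Finset.mem_range] at hm; simp only [Finset.mem_Icc]; omega
    · intro j hj; simp only [Finset.mem_Icc] at hj; omega
    · intro m hm; simp only [Finset.mem_range] at hm; omega
    · intro j hj
      simp only [Finset.mem_Icc] at hj
      have e1 : (-1 : ℝ) ^ (l + j) = (-1 : ℝ) ^ (j - l) := by
        have : l + j = (j - l) + 2 * l := by omega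
        rw [this, pow_add, pow_mul]; simp
      have e2 : (L + n).choose (j + n) = (L + n).choose (L - l - (j - l)) := by
        rw [← Nat.choose_symm (show j + n ≤ L + n by omega)]
        congr 1; omega
      have e3 : (j - l + n - 1).choose (n - 1) = (j - l + n - 1).choose (j - l) := by
        rw [← Nat.choose_symm (show n - 1 ≤ j - l + n - 1 by omega)]
        congr 1; omega
      rw [e1, e2, e3]; ring
  rw [key, auxF_eq n L (L - l), Nat.choose_symm hlL]

/-- For all integers `L ≥ 1`, `n ≥ 1` and every real `x`,
`∑_{j=1}^{L} ∑_{ℓ=1}^{j} (−1)^{ℓ+j} C(L+n, j+n) C(j−ℓ+n−1, n−1) x^ℓ = (1+x)^L − 1`. -/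
theorem double_binomial_sum_identity (L n : ℕ) (hL : 1 ≤ L) (hn : 1 ≤ n) (x : ℝ) :
    ∑ j ∈ Finset.Icc 1 L, ∑ l ∈ Finset.Icc 1 j,
        (-1 : ℝ) ^ (l + j) * ((L + n).choose (j + n) : ℝ) *
          ((j - l + n - 1).choose (n - 1) : ℝ) * x ^ l
      = (1 + x) ^ L - 1 := by
  rw [Finset.sum_comm' (s' := fun l => Finset.Icc l L) (t' := Finset.Icc 1 L)
      (by intro j l; simp only [Finset.mem_Icc]; omega)]
  have step : ∀ l ∈ Finset.Icc 1 L,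
      ∑ j ∈ Finset.Icc l L,
        (-1 : ℝ) ^ (l + j) * ((L + n).choose (j + n) : ℝ) *
          ((j - l + n - 1).choose (n - 1) : ℝ) * x ^ l
      = (L.choose l : ℝ) * x ^ l := by
    intro l hl
    simp only [Finset.mem_Icc] at hl
    rw [← Finset.sum_mul, inner_sum_aux L n l hn hl.1 hl.2]
  rw [Finset.sum_congr rfl step]
  have expand : (1 + x) ^ L = ∑ l ∈ Finset.range (L + 1), (L.choose l : ℝ) * x ^ l := by
    rw [add_comm, add_pow]
    apply Finset.sum_congr rfl
    intro l hl; ring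
  rw [expand, Finset.sum_range_succ' (fun l => (L.choose l : ℝ) * x ^ l) L]
  simp only [Nat.choose_zero_right, Nat.cast_one, pow_zero, mul_one, add_sub_cancel_right]
  apply Finset.sum_nbij' (fun l => l - 1) (fun m => m + 1)
  · intro l hl; simp only [Finset.mem_Icc] at hl; simp only [Finset.mem_range]; omega
  · intro m hm; simp only [Finset.mem_range] at hm; simp only [Finset.mem_Icc]; omega
  · intro l hl; simp only [Finset.mem_Icc] at hl; omega
  · intro m hm; omega
  · intro l hl
    simp only [Finset.mem_Icc] at hl
    have : l - 1 + 1 = l := by omega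
    rw [this]
end

section
/- Let f_{j+1},…,f_n be generating functions of probability distributions on the nonnegative integers, each with mean f̄_i ∈ (0,∞), let φ_i denote the shape function of f_i, and let f_{j,n} = f_{j+1}∘…∘f_n (with f_{n,n}(s)=s) and f̄_{j,n} = ∏_{i=j+1}^n f̄_i. Then for every s∈[0,1), 1/(1 − f_{j,n}(s)) = 1/(f̄_{j,n}(1−s)) + ∑_{k=j+1}^{n} φ_k(f_{k,n}(s)) / f̄_{j,k−1}. -/
open Filter Topology

lemma compGF_of_le (q : ℕ → ℝ → ℝ) {j n : ℕ} (h : n ≤ j) (s : ℝ) :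
    compGF q j n s = s := by
  cases n with
  | zero => rfl
  | succ m => simp [compGF, h]

lemma compGF_succ (q : ℕ → ℝ → ℝ) {j n : ℕ} (h : j ≤ n) (s : ℝ) :
    compGF q j (n + 1) s = compGF q j n (q n s) := by
  have hnot : ¬ (n + 1 ≤ j) := by omega
  simp [compGF, hnot]

lemma pgf_mem (p : ℕ → ℝ) (hp0 : ∀ k, 0 ≤ p k) (hp1 : (∑' k : ℕ, p k) = 1)
    (hm : 0 < pmean p) {s : ℝ} (hs : s ∈ Set.Ico (0:ℝ) 1) :
    pgf p s ∈ Set.Ico (0:ℝ) 1 := by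
  obtain ⟨hs0, hs1⟩ := hs
  have hpsum : Summable p := by
    by_contra h
    rw [tsum_eq_zero_of_not_summable h] at hp1; norm_num at hp1
  have hle : ∀ k, p k * s ^ k ≤ p k := fun k =>
    mul_le_of_le_one_right (hp0 k) (pow_le_one₀ hs0 hs1.le)
  have hnn : ∀ k, 0 ≤ p k * s ^ k := fun k =>
    mul_nonneg (hp0 k) (pow_nonneg hs0 k)
  constructor
  · exact tsum_nonneg hnn
  · obtain ⟨i, hi⟩ : ∃ i : ℕ, 0 < (i : ℝ) * p i := by
      by_contra h
      push_neg at h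
      have hz : ∀ i : ℕ, (i : ℝ) * p i = 0 := fun i =>
        le_antisymm (h i) (mul_nonneg (Nat.cast_nonneg i) (hp0 i))
      have : pmean p = 0 := by unfold pmean; simp [hz]
      linarith [hm]
    have hi0 : i ≠ 0 := by
      rintro rfl; simp at hi
    have hpi : 0 < p i := by
      rcases (mul_pos_iff.mp hi) with ⟨_, h2⟩ | ⟨h1, _⟩
      · exact h2
      · exact absurd h1 (Nat.cast_nonneg i).not_gt
    have hstrict : p i * s ^ i < p i := by
      nth_rewrite 2 [← mul_one (p i)]
      exact mul_lt_mul_of_pos_left (pow_lt_one₀ hs0 hs1 hi0) hpi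
    have h := Summable.tsum_lt_tsum hle hstrict
        (Summable.of_nonneg_of_le hnn hle hpsum) hpsum
    rw [hp1] at h
    simpa [pgf] using h

/-- For probability generating functions `f_{j+1},…,f_n` with finite
positive means, and `f_{j,n} = f_{j+1} ∘ … ∘ f_n`, `f̄_{j,n} = ∏_{i=j+1}^n f̄_i`,
for every `s ∈ [0,1)`:
`1/(1 − f_{j,n}(s)) = 1/(f̄_{j,n}(1−s)) + ∑_{k=j+1}^{n} φ_k(f_{k,n}(s)) / f̄_{j,k−1}`.
Here `q i` is the offspring distribution with generating function `f_{i+1}`, so that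
`compGF (fun i => pgf (q i)) j n` is `f_{j,n}`, `∏_{i ∈ Ico j n} pmean (q i)` is
`f̄_{j,n}`, and the paper's summation index `k ∈ {j+1,…,n}` corresponds to
`k ∈ Ico j n` via `k ↦ k+1`. -/
theorem shape_function_iteration_identity
    (q : ℕ → ℕ → ℝ)
    (hq0 : ∀ i k, 0 ≤ q i k)
    (hq1 : ∀ i, (∑' k : ℕ, q i k) = 1)
    (hsum1 : ∀ i, Summable fun k : ℕ => (k : ℝ) * q i k)
    (hmeanpos : ∀ i, 0 < pmean (q i))
    (j n : ℕ) (hjn : j ≤ n) (s : ℝ) (hs : s ∈ Set.Ico (0 : ℝ) 1) :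
    1 / (1 - compGF (fun i => pgf (q i)) j n s) =
      1 / ((∏ i ∈ Finset.Ico j n, pmean (q i)) * (1 - s)) +
        ∑ k ∈ Finset.Ico j n,
          shapeFun (q k) (compGF (fun i => pgf (q i)) (k + 1) n s) /
            ∏ i ∈ Finset.Ico j k, pmean (q i) := by
  induction n, hjn using Nat.le_induction generalizing s with
  | base => simp [compGF_of_le _ le_rfl]
  | succ n hn ih =>
      obtain ⟨hs0, hs1⟩ := hs
      set t := pgf (q n) s with ht
      have htm : t ∈ Set.Ico (0:ℝ) 1 := pgf_mem _ (hq0 n) (hq1 n) (hmeanpos n) ⟨hs0, hs1⟩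
      have key := ih t htm
      have h1 : compGF (fun i => pgf (q i)) j (n + 1) s
          = compGF (fun i => pgf (q i)) j n t := compGF_succ _ hn s
      rw [h1, key, Finset.prod_Ico_succ_top hn,
        Finset.sum_Ico_succ_top hn, compGF_of_le _ le_rfl]
      have hsum : ∀ k ∈ Finset.Ico j n,
          shapeFun (q k) (compGF (fun i => pgf (q i)) (k + 1) n t) /
            ∏ i ∈ Finset.Ico j k, pmean (q i)
          = shapeFun (q k) (compGF (fun i => pgf (q i)) (k + 1) (n + 1) s) /
            ∏ i ∈ Finset.Ico j k, pmean (q i) := by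
        intro k hk
        rw [Finset.mem_Ico] at hk
        rw [compGF_succ _ (by omega : k + 1 ≤ n) s]
      rw [Finset.sum_congr rfl hsum]
      -- remains: 1/(P(1−t)) + Σ = 1/((P*m)(1−s)) + (Σ + φ_n(s)/P)
      have hphi : shapeFun (q n) s = 1 / (1 - t) - 1 / (pmean (q n) * (1 - s)) := by
        rw [shapeFun, if_neg (by linarith : s ≠ 1)]
      rw [hphi]
      have hP : (0:ℝ) < ∏ i ∈ Finset.Ico j n, pmean (q i) :=
        Finset.prod_pos fun i _ => hmeanpos i
      have hm : (0:ℝ) < pmean (q n) := hmeanpos n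
      have h1s : (0:ℝ) < 1 - s := by linarith
      have h1t : (0:ℝ) < 1 - t := by linarith [htm.2]
      field_simp
      ring
end

section
/- Assume (C1), and assume m_{n,1}/(1−f̄_n) → λ_1 ∈ [0,∞) as n→∞, where m_{n,1}=E[ε_n] is the mean of the immigration law. Then for every s∈[0,1], | ∏_{j=1}^n h_j(f_{j,n}(s)) − ∏_{j=1}^n exp( h_j(f_{j,n}(s)) − 1 ) | → 0 as n→∞; that is, the generating function of Y_n is asymptotically equal to the generating function of the compound-Poisson accompanying law. -/
open Filter Topology

open Finset

lemma my_summable_of_tsum_eq_one {p : ℕ → ℝ} (hp1 : (∑' k, p k) = 1) : Summable p := by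
  by_contra h
  rw [tsum_eq_zero_of_not_summable h] at hp1
  norm_num at hp1

lemma my_summable_pgf {p : ℕ → ℝ} (hp : Summable p) (hp0 : ∀ k, 0 ≤ p k) {u : ℝ}
    (hu0 : 0 ≤ u) (hu1 : u ≤ 1) : Summable (fun k => p k * u ^ k) :=
  hp.of_nonneg_of_le (fun k => mul_nonneg (hp0 k) (pow_nonneg hu0 k))
    (fun k => mul_le_of_le_one_right (hp0 k) (pow_le_one₀ hu0 hu1))

lemma my_pgf_nonneg {p : ℕ → ℝ} (hp0 : ∀ k, 0 ≤ p k) {u : ℝ} (hu0 : 0 ≤ u) :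
    0 ≤ pgf p u :=
  tsum_nonneg (fun k => mul_nonneg (hp0 k) (pow_nonneg hu0 k))

lemma my_pgf_le_one {p : ℕ → ℝ} (hp0 : ∀ k, 0 ≤ p k) (hp1 : (∑' k, p k) = 1) {u : ℝ}
    (hu0 : 0 ≤ u) (hu1 : u ≤ 1) : pgf p u ≤ 1 := by
  have hp := my_summable_of_tsum_eq_one hp1
  rw [pgf, ← hp1]
  exact Summable.tsum_le_tsum (fun k => mul_le_of_le_one_right (hp0 k) (pow_le_one₀ hu0 hu1))
    (my_summable_pgf hp hp0 hu0 hu1) hp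

lemma my_one_sub_pow_le {u : ℝ} (hu0 : 0 ≤ u) (hu1 : u ≤ 1) :
    ∀ k : ℕ, 1 - u ^ k ≤ (k : ℝ) * (1 - u) := by
  intro k
  induction k with
  | zero => simp
  | succ k ih =>
    have h1 : u ^ k ≤ 1 := pow_le_one₀ hu0 hu1
    have h2 : 0 ≤ u ^ k := pow_nonneg hu0 k
    push_cast
    rw [pow_succ]
    nlinarith

lemma my_one_sub_pgf_le {p : ℕ → ℝ} (hp0 : ∀ k, 0 ≤ p k) (hp1 : (∑' k, p k) = 1)
    (hm : Summable fun k : ℕ => (k : ℝ) * p k) {u : ℝ} (hu0 : 0 ≤ u) (hu1 : u ≤ 1) :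
    1 - pgf p u ≤ (∑' k : ℕ, (k : ℝ) * p k) * (1 - u) := by
  have hp := my_summable_of_tsum_eq_one hp1
  have hpg := my_summable_pgf hp hp0 hu0 hu1
  have h1 : 1 - pgf p u = ∑' k : ℕ, (p k - p k * u ^ k) := by
    rw [Summable.tsum_sub hp hpg, hp1, pgf]
  have h2 : (∑' k : ℕ, (k : ℝ) * p k) * (1 - u) = ∑' k : ℕ, (k : ℝ) * p k * (1 - u) :=
    tsum_mul_right.symm
  rw [h1, h2]
  refine Summable.tsum_le_tsum (fun k => ?_) (hp.sub hpg) (hm.mul_right (1 - u))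
  have h3 : 1 - u ^ k ≤ (k : ℝ) * (1 - u) := my_one_sub_pow_le hu0 hu1 k
  have := hp0 k
  nlinarith

lemma my_compGF_mem {q : ℕ → ℝ → ℝ}
    (hq : ∀ i u, 0 ≤ u → u ≤ 1 → 0 ≤ q i u ∧ q i u ≤ 1) (j : ℕ) :
    ∀ n : ℕ, ∀ u : ℝ, 0 ≤ u → u ≤ 1 → 0 ≤ compGF q j n u ∧ compGF q j n u ≤ 1 := by
  intro n
  induction n with
  | zero => intro u h0 h1; exact ⟨h0, h1⟩
  | succ n ih =>
    intro u h0 h1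
    simp only [compGF]
    split
    · exact ⟨h0, h1⟩
    · exact ih (q n u) (hq n u h0 h1).1 (hq n u h0 h1).2

lemma my_one_sub_compGF_le {q : ℕ → ℝ → ℝ} {fb : ℕ → ℝ}
    (hq : ∀ i u, 0 ≤ u → u ≤ 1 → 0 ≤ q i u ∧ q i u ≤ 1)
    (hfb0 : ∀ i, 0 ≤ fb i)
    (hbd : ∀ i u, 0 ≤ u → u ≤ 1 → 1 - q i u ≤ fb i * (1 - u)) (j : ℕ) :
    ∀ n : ℕ, ∀ u : ℝ, 0 ≤ u → u ≤ 1 →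
      1 - compGF q j n u ≤ (∏ i ∈ Ico j n, fb i) * (1 - u) := by
  intro n
  induction n with
  | zero => intro u h0 h1; simp [compGF]
  | succ n ih =>
    intro u h0 h1
    simp only [compGF]
    split
    · rename_i hle
      rw [Finset.Ico_eq_empty (by omega)]
      simp
    · rename_i hlt
      have hjn : j ≤ n := by omega
      have hqmem := hq n u h0 h1
      have h2 := ih (q n u) hqmem.1 hqmem.2
      have h3 : 1 - q n u ≤ fb n * (1 - u) := hbd n u h0 h1
      have hprod : 0 ≤ ∏ i ∈ Ico j n, fb i := Finset.prod_nonneg (fun i _ => hfb0 i)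
      rw [Finset.prod_Ico_succ_top hjn]
      calc 1 - compGF q j n (q n u) ≤ (∏ i ∈ Ico j n, fb i) * (1 - q n u) := h2
        _ ≤ (∏ i ∈ Ico j n, fb i) * (fb n * (1 - u)) := by
            exact mul_le_mul_of_nonneg_left h3 hprod
        _ = (∏ i ∈ Ico j n, fb i) * fb n * (1 - u) := by ring

lemma my_abs_prod_sub_prod_le (a b : ℕ → ℝ) (ha0 : ∀ j, 0 ≤ a j) (ha1 : ∀ j, a j ≤ 1)
    (hb0 : ∀ j, 0 ≤ b j) (hb1 : ∀ j, b j ≤ 1) (n : ℕ) :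
    |(∏ j ∈ range n, a j) - ∏ j ∈ range n, b j| ≤ ∑ j ∈ range n, |a j - b j| := by
  induction n with
  | zero => simp
  | succ n ih =>
    rw [Finset.prod_range_succ, Finset.prod_range_succ, Finset.sum_range_succ]
    have hQ0 : 0 ≤ ∏ j ∈ range n, b j := Finset.prod_nonneg (fun j _ => hb0 j)
    have hQ1 : (∏ j ∈ range n, b j) ≤ 1 := Finset.prod_le_one (fun j _ => hb0 j) (fun j _ => hb1 j)
    have key : (∏ j ∈ range n, a j) * a n - (∏ j ∈ range n, b j) * b n
        = a n * ((∏ j ∈ range n, a j) - ∏ j ∈ range n, b j)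
          + (a n - b n) * ∏ j ∈ range n, b j := by ring
    rw [key]
    calc |a n * ((∏ j ∈ range n, a j) - ∏ j ∈ range n, b j)
          + (a n - b n) * ∏ j ∈ range n, b j|
        ≤ |a n * ((∏ j ∈ range n, a j) - ∏ j ∈ range n, b j)|
          + |(a n - b n) * ∏ j ∈ range n, b j| := abs_add_le _ _
      _ ≤ |(∏ j ∈ range n, a j) - ∏ j ∈ range n, b j| + |a n - b n| := by
          rw [abs_mul, abs_mul]
          have hA : |a n| ≤ 1 := by rw [abs_of_nonneg (ha0 n)]; exact ha1 n
          have hQ : |∏ j ∈ range n, b j| ≤ 1 := by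
            rw [abs_of_nonneg hQ0]; exact hQ1
          exact add_le_add (mul_le_of_le_one_left (abs_nonneg _) hA)
            (mul_le_of_le_one_right (abs_nonneg _) hQ)
      _ ≤ (∑ j ∈ range n, |a j - b j|) + |a n - b n| := by gcongr
  
lemma my_exp_sub_le {x : ℝ} (hx0 : 0 ≤ x) (hx1 : x ≤ 1) :
    Real.exp (x - 1) - x ≤ (1 - x) ^ 2 := by
  have h1 : (1 - x) + 1 ≤ Real.exp (1 - x) := Real.add_one_le_exp (1 - x)
  have h2 : Real.exp (x - 1) * Real.exp (1 - x) = 1 := by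
    rw [← Real.exp_add]; norm_num
  have h3 : 0 < Real.exp (x - 1) := Real.exp_pos _
  have h4 : Real.exp (x - 1) * (2 - x) ≤ 1 := by nlinarith
  nlinarith [sq_nonneg (1 - x), pow_nonneg (sub_nonneg.mpr hx1) 3]

/-- Under (C1), if the immigration means satisfy
`m_{n,1}/(1−f̄_n) → λ₁ ∈ [0,∞)`, then for every `s ∈ [0,1]` the generating
function of `Y_n` is asymptotically equal to that of the compound-Poisson
accompanying law:
`| ∏_{j=1}^n h_j(f_{j,n}(s)) − ∏_{j=1}^n exp( h_j(f_{j,n}(s)) − 1 ) | → 0`.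
Here `p n` is the offspring distribution of generation `n+1` and `e n` the
immigration distribution of `ε_{n+1}`. -/
theorem accompanying_law_approximation
    (p : ℕ → ℕ → ℝ)
    (hp0 : ∀ n k, 0 ≤ p n k)
    (hp1 : ∀ n, (∑' k : ℕ, p n k) = 1)
    (hsum1 : ∀ n, Summable fun k : ℕ => (k : ℝ) * p n k)
    -- (C1)
    (hC1a : ∀ n, pmean (p n) < 1)
    (hC1b : Tendsto (fun n => pmean (p n)) atTop (𝓝 1))
    (hC1c : ¬ Summable fun n => 1 - pmean (p n))
    -- immigration
    (e : ℕ → ℕ → ℝ)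
    (he0 : ∀ n k, 0 ≤ e n k)
    (he1 : ∀ n, (∑' k : ℕ, e n k) = 1)
    (hemean : ∀ n, Summable fun i : ℕ => (i : ℝ) * e n i)
    (lam1 : ℝ) (hlam1 : 0 ≤ lam1)
    (hm1 : Tendsto (fun n => (∑' i : ℕ, (i : ℝ) * e n i) / (1 - pmean (p n)))
      atTop (𝓝 lam1)) :
    ∀ s ∈ Set.Icc (0 : ℝ) 1,
      Tendsto
        (fun n =>
          |(∏ j ∈ Finset.range n, pgf (e j) (compGF (fun i => pgf (p i)) (j + 1) n s)) -
            ∏ j ∈ Finset.range n,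
              Real.exp (pgf (e j) (compGF (fun i => pgf (p i)) (j + 1) n s) - 1)|)
        atTop (𝓝 0) := by
  intro s hs
  obtain ⟨hs0, hs1⟩ := hs
  set q : ℕ → ℝ → ℝ := fun i => pgf (p i) with hq_def
  have hqmem : ∀ i u, 0 ≤ u → u ≤ 1 → 0 ≤ q i u ∧ q i u ≤ 1 := fun i u h0 h1 =>
    ⟨my_pgf_nonneg (hp0 i) h0, my_pgf_le_one (hp0 i) (hp1 i) h0 h1⟩
  have hfb0 : ∀ i, 0 ≤ pmean (p i) := fun i =>
    tsum_nonneg (fun k => mul_nonneg (Nat.cast_nonneg k) (hp0 i k))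
  have hbd : ∀ i u, 0 ≤ u → u ≤ 1 → 1 - q i u ≤ pmean (p i) * (1 - u) := fun i u h0 h1 =>
    my_one_sub_pgf_le (hp0 i) (hp1 i) (hsum1 i) h0 h1
  have hm0 : ∀ j, 0 ≤ (∑' i : ℕ, (i : ℝ) * e j i) := fun j =>
    tsum_nonneg (fun i => mul_nonneg (Nat.cast_nonneg i) (he0 j i))
  -- membership of compGF and a
  have hcmem : ∀ n j, 0 ≤ compGF q (j + 1) n s ∧ compGF q (j + 1) n s ≤ 1 :=
    fun n j => my_compGF_mem hqmem (j + 1) n s hs0 hs1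
  have hamem : ∀ n j, 0 ≤ pgf (e j) (compGF q (j + 1) n s) ∧
      pgf (e j) (compGF q (j + 1) n s) ≤ 1 := fun n j =>
    ⟨my_pgf_nonneg (he0 j) (hcmem n j).1,
     my_pgf_le_one (he0 j) (he1 j) (hcmem n j).1 (hcmem n j).2⟩
  -- key bound  1 - a_{j,n} ≤ m_j * π_{j,n}
  have hπ0 : ∀ n j, (0:ℝ) ≤ ∏ i ∈ Ico (j + 1) n, pmean (p i) :=
    fun n j => Finset.prod_nonneg (fun i _ => hfb0 i)
  have hπ1 : ∀ n j, (∏ i ∈ Ico (j + 1) n, pmean (p i)) ≤ 1 :=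
    fun n j => Finset.prod_le_one (fun i _ => hfb0 i) (fun i _ => (hC1a i).le)
  have hkey : ∀ n j, 1 - pgf (e j) (compGF q (j + 1) n s) ≤
      (∑' i : ℕ, (i : ℝ) * e j i) * ∏ i ∈ Ico (j + 1) n, pmean (p i) := by
    intro n j
    have h1 : 1 - compGF q (j + 1) n s ≤ (∏ i ∈ Ico (j + 1) n, pmean (p i)) * (1 - s) :=
      my_one_sub_compGF_le hqmem hfb0 hbd (j + 1) n s hs0 hs1
    have h2 : 1 - pgf (e j) (compGF q (j + 1) n s) ≤
        (∑' i : ℕ, (i : ℝ) * e j i) * (1 - compGF q (j + 1) n s) :=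
      my_one_sub_pgf_le (he0 j) (he1 j) (hemean j) (hcmem n j).1 (hcmem n j).2
    have h3 : (∏ i ∈ Ico (j + 1) n, pmean (p i)) * (1 - s) ≤
        ∏ i ∈ Ico (j + 1) n, pmean (p i) :=
      mul_le_of_le_one_right (hπ0 n j) (by linarith)
    calc 1 - pgf (e j) (compGF q (j + 1) n s)
        ≤ (∑' i : ℕ, (i : ℝ) * e j i) * (1 - compGF q (j + 1) n s) := h2
      _ ≤ (∑' i : ℕ, (i : ℝ) * e j i) * ∏ i ∈ Ico (j + 1) n, pmean (p i) := by
          apply mul_le_mul_of_nonneg_left _ (hm0 j)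
          linarith
  -- telescoping bound
  have htel : ∀ n, ∑ j ∈ range n,
      (1 - pmean (p j)) * ∏ i ∈ Ico (j + 1) n, pmean (p i) ≤ 1 := by
    intro n
    have hcongr : ∀ j ∈ range n,
        (1 - pmean (p j)) * ∏ i ∈ Ico (j + 1) n, pmean (p i) =
        (∏ i ∈ Ico (j + 1) n, pmean (p i)) - ∏ i ∈ Ico j n, pmean (p i) := by
      intro j hj
      rw [Finset.prod_eq_prod_Ico_succ_bot (Finset.mem_range.mp hj)]
      ring
    rw [Finset.sum_congr rfl hcongr,
      Finset.sum_range_sub (fun j => ∏ i ∈ Ico j n, pmean (p i))]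
    have h1 : (0:ℝ) ≤ ∏ i ∈ Ico 0 n, pmean (p i) := Finset.prod_nonneg (fun i _ => hfb0 i)
    simp only [Finset.Ico_self, Finset.prod_empty]
    linarith
  -- reduce to epsilon form
  rw [NormedAddCommGroup.tendsto_nhds_zero]
  intro ε hε
  set C : ℝ := lam1 + 1 with hC_def
  have hC : (0:ℝ) < C := by linarith
  set ε' : ℝ := ε / (2 * C ^ 2) with hε'_def
  have hε' : 0 < ε' := by positivity
  have hev1 : ∀ᶠ j in atTop, (∑' i : ℕ, (i : ℝ) * e j i) / (1 - pmean (p j)) < C :=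
    hm1.eventually_lt_const (by linarith)
  have hev2 : ∀ᶠ j in atTop, 1 - pmean (p j) < ε' := by
    have h : Tendsto (fun j => 1 - pmean (p j)) atTop (𝓝 0) := by
      have := hC1b.const_sub 1
      simpa using this
    exact h.eventually_lt_const hε'
  obtain ⟨N, hN⟩ := eventually_atTop.mp (hev1.and hev2)
  have hNb : ∀ j, N ≤ j → (∑' i : ℕ, (i : ℝ) * e j i) ≤ C * (1 - pmean (p j)) := by
    intro j hj
    have h := (hN j hj).1
    have hpos : 0 < 1 - pmean (p j) := by linarith [hC1a j]
    rw [div_lt_iff₀ hpos] at h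
    linarith
  set K : ℝ := ∑ j ∈ range N, (∑' i : ℕ, (i : ℝ) * e j i) ^ 2 with hK_def
  have hK0 : 0 ≤ K := Finset.sum_nonneg (fun j _ => sq_nonneg _)
  set G : ℕ → ℝ := fun n => ∏ i ∈ Ico N n, pmean (p i) with hG_def
  have hG0 : ∀ n, 0 ≤ G n := fun n => Finset.prod_nonneg (fun i _ => hfb0 i)
  -- G n → 0
  have hsum_div : Tendsto (fun n => ∑ i ∈ Ico N n, (1 - pmean (p i))) atTop atTop := by
    have h1 : Tendsto (fun n => ∑ i ∈ range n, (1 - pmean (p i))) atTop atTop :=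
      (not_summable_iff_tendsto_nat_atTop_of_nonneg
        (fun i => by linarith [hC1a i])).mp hC1c
    have h2 : Tendsto (fun n => (∑ i ∈ range n, (1 - pmean (p i)))
        - ∑ i ∈ range N, (1 - pmean (p i))) atTop atTop :=
      tendsto_atTop_add_const_right _ _ h1
    apply h2.congr'
    filter_upwards [eventually_ge_atTop N] with n hn
    exact (Finset.sum_Ico_eq_sub _ hn).symm
  have hGle : ∀ n, G n ≤ Real.exp (-(∑ i ∈ Ico N n, (1 - pmean (p i)))) := by
    intro n
    have h1 : G n ≤ ∏ i ∈ Ico N n, Real.exp (pmean (p i) - 1) :=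
      Finset.prod_le_prod (fun i _ => hfb0 i)
        (fun i _ => by linarith [Real.add_one_le_exp (pmean (p i) - 1)])
    have h2 : (∏ i ∈ Ico N n, Real.exp (pmean (p i) - 1)) =
        Real.exp (∑ i ∈ Ico N n, (pmean (p i) - 1)) := (Real.exp_sum _ _).symm
    have h3 : (∑ i ∈ Ico N n, (pmean (p i) - 1)) = -(∑ i ∈ Ico N n, (1 - pmean (p i))) := by
      rw [← Finset.sum_neg_distrib]
      exact Finset.sum_congr rfl (fun i _ => by ring)
    rw [h2, h3] at h1
    exact h1
  have hGtend : Tendsto G atTop (𝓝 0) := by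
    apply squeeze_zero hG0 hGle
    exact Real.tendsto_exp_atBot.comp (tendsto_neg_atTop_atBot.comp hsum_div)
  have hKG : Tendsto (fun n => K * G n ^ 2) atTop (𝓝 0) := by
    have h1 : Tendsto (fun n => G n ^ 2) atTop (𝓝 (0 ^ 2)) := hGtend.pow 2
    have h2 := h1.const_mul K
    simpa using h2
  have hev3 : ∀ᶠ n in atTop, K * G n ^ 2 < ε / 2 := hKG.eventually_lt_const (half_pos hε)
  filter_upwards [hev3, eventually_ge_atTop (N + 1)] with n hKGn hn
  have hNn : N ≤ n := by omega
  rw [Real.norm_eq_abs, abs_abs]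
  -- abbreviations (all bounds already in scope)
  have step2 : ∀ j, |pgf (e j) (compGF q (j + 1) n s)
      - Real.exp (pgf (e j) (compGF q (j + 1) n s) - 1)| ≤
      ((∑' i : ℕ, (i : ℝ) * e j i) ^ 2) * (∏ i ∈ Ico (j + 1) n, pmean (p i)) ^ 2 := by
    intro j
    obtain ⟨ha0, ha1⟩ := hamem n j
    have hge : pgf (e j) (compGF q (j + 1) n s) ≤
        Real.exp (pgf (e j) (compGF q (j + 1) n s) - 1) := by
      have := Real.add_one_le_exp (pgf (e j) (compGF q (j + 1) n s) - 1)
      linarith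
    rw [abs_sub_comm, abs_of_nonneg (by linarith)]
    have h1 : Real.exp (pgf (e j) (compGF q (j + 1) n s) - 1)
        - pgf (e j) (compGF q (j + 1) n s) ≤
        (1 - pgf (e j) (compGF q (j + 1) n s)) ^ 2 := my_exp_sub_le ha0 ha1
    have h2 : (1 - pgf (e j) (compGF q (j + 1) n s)) ^ 2 ≤
        ((∑' i : ℕ, (i : ℝ) * e j i) * ∏ i ∈ Ico (j + 1) n, pmean (p i)) ^ 2 := by
      apply pow_le_pow_left₀ (by linarith) (hkey n j)
    calc Real.exp (pgf (e j) (compGF q (j + 1) n s) - 1)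
          - pgf (e j) (compGF q (j + 1) n s)
        ≤ (1 - pgf (e j) (compGF q (j + 1) n s)) ^ 2 := h1
      _ ≤ ((∑' i : ℕ, (i : ℝ) * e j i) * ∏ i ∈ Ico (j + 1) n, pmean (p i)) ^ 2 := h2
      _ = ((∑' i : ℕ, (i : ℝ) * e j i) ^ 2) * (∏ i ∈ Ico (j + 1) n, pmean (p i)) ^ 2 :=
        mul_pow _ _ 2
  -- head bound
  have hhead : ∑ j ∈ Ico 0 N,
      ((∑' i : ℕ, (i : ℝ) * e j i) ^ 2) * (∏ i ∈ Ico (j + 1) n, pmean (p i)) ^ 2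
      ≤ K * G n ^ 2 := by
    rw [hK_def, Finset.sum_mul, ← Nat.Ico_zero_eq_range]
    apply Finset.sum_le_sum
    intro j hj
    have hjN : j + 1 ≤ N := Finset.mem_Ico.mp hj |>.2
    have hsplit : (∏ i ∈ Ico (j + 1) N, pmean (p i)) * G n =
        ∏ i ∈ Ico (j + 1) n, pmean (p i) := Finset.prod_Ico_consecutive _ hjN hNn
    have hle : (∏ i ∈ Ico (j + 1) n, pmean (p i)) ≤ G n := by
      rw [← hsplit]
      apply mul_le_of_le_one_left (hG0 n)
      exact Finset.prod_le_one (fun i _ => hfb0 i) (fun i _ => (hC1a i).le)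
    have h2 : (∏ i ∈ Ico (j + 1) n, pmean (p i)) ^ 2 ≤ G n ^ 2 :=
      pow_le_pow_left₀ (hπ0 n j) hle 2
    exact mul_le_mul_of_nonneg_left h2 (sq_nonneg _)
  -- tail bound
  have htail : ∑ j ∈ Ico N n,
      ((∑' i : ℕ, (i : ℝ) * e j i) ^ 2) * (∏ i ∈ Ico (j + 1) n, pmean (p i)) ^ 2
      ≤ ε / 2 := by
    have hterm : ∀ j ∈ Ico N n,
        ((∑' i : ℕ, (i : ℝ) * e j i) ^ 2) * (∏ i ∈ Ico (j + 1) n, pmean (p i)) ^ 2 ≤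
        C ^ 2 * ε' * ((1 - pmean (p j)) * ∏ i ∈ Ico (j + 1) n, pmean (p i)) := by
      intro j hj
      have hjN : N ≤ j := (Finset.mem_Ico.mp hj).1
      have hm := hNb j hjN
      have hfe := (hN j hjN).2
      have hfpos : (0:ℝ) ≤ 1 - pmean (p j) := by linarith [hC1a j]
      have hπ0' := hπ0 n j
      have hπ1' := hπ1 n j
      have hm0' := hm0 j
      have h1 : (∑' i : ℕ, (i : ℝ) * e j i) * ∏ i ∈ Ico (j + 1) n, pmean (p i)
          ≤ (C * (1 - pmean (p j))) * ∏ i ∈ Ico (j + 1) n, pmean (p i) :=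
        mul_le_mul_of_nonneg_right hm hπ0'
      have h2 : ((∑' i : ℕ, (i : ℝ) * e j i) * ∏ i ∈ Ico (j + 1) n, pmean (p i)) ^ 2
          ≤ ((C * (1 - pmean (p j))) * ∏ i ∈ Ico (j + 1) n, pmean (p i)) ^ 2 :=
        pow_le_pow_left₀ (mul_nonneg hm0' hπ0') h1 2
      have h3 : (1 - pmean (p j)) * ∏ i ∈ Ico (j + 1) n, pmean (p i) ≤ ε' := by
        have := mul_le_mul hfe.le hπ1' hπ0' hε'.le
        linarith
      calc (∑' i : ℕ, (i : ℝ) * e j i) ^ 2 * (∏ i ∈ Ico (j + 1) n, pmean (p i)) ^ 2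
          = ((∑' i : ℕ, (i : ℝ) * e j i) * ∏ i ∈ Ico (j + 1) n, pmean (p i)) ^ 2 :=
            (mul_pow _ _ 2).symm
        _ ≤ ((C * (1 - pmean (p j))) * ∏ i ∈ Ico (j + 1) n, pmean (p i)) ^ 2 := h2
        _ = C ^ 2 * (((1 - pmean (p j)) * ∏ i ∈ Ico (j + 1) n, pmean (p i))
              * ((1 - pmean (p j)) * ∏ i ∈ Ico (j + 1) n, pmean (p i))) := by ring
        _ ≤ C ^ 2 * (ε' * ((1 - pmean (p j)) * ∏ i ∈ Ico (j + 1) n, pmean (p i))) := by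
            apply mul_le_mul_of_nonneg_left _ (sq_nonneg C)
            exact mul_le_mul_of_nonneg_right h3 (mul_nonneg hfpos hπ0')
        _ = C ^ 2 * ε' * ((1 - pmean (p j)) * ∏ i ∈ Ico (j + 1) n, pmean (p i)) := by ring
    calc ∑ j ∈ Ico N n,
          ((∑' i : ℕ, (i : ℝ) * e j i) ^ 2) * (∏ i ∈ Ico (j + 1) n, pmean (p i)) ^ 2
        ≤ ∑ j ∈ Ico N n,
          C ^ 2 * ε' * ((1 - pmean (p j)) * ∏ i ∈ Ico (j + 1) n, pmean (p i)) :=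
          Finset.sum_le_sum hterm
      _ = C ^ 2 * ε' * ∑ j ∈ Ico N n,
          ((1 - pmean (p j)) * ∏ i ∈ Ico (j + 1) n, pmean (p i)) := by
          rw [Finset.mul_sum]
      _ ≤ C ^ 2 * ε' * ∑ j ∈ range n,
          ((1 - pmean (p j)) * ∏ i ∈ Ico (j + 1) n, pmean (p i)) := by
          apply mul_le_mul_of_nonneg_left _ (by positivity)
          apply Finset.sum_le_sum_of_subset_of_nonneg
          · intro x hx
            rw [Finset.mem_range]
            exact (Finset.mem_Ico.mp hx).2
          · intro j hj _
            exact mul_nonneg (by linarith [hC1a j]) (hπ0 n j)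
      _ ≤ C ^ 2 * ε' * 1 := by
          apply mul_le_mul_of_nonneg_left (htel n) (by positivity)
      _ = ε / 2 := by
          rw [hε'_def]
          field_simp
  -- final chain
  calc |(∏ j ∈ range n, pgf (e j) (compGF q (j + 1) n s)) -
        ∏ j ∈ range n, Real.exp (pgf (e j) (compGF q (j + 1) n s) - 1)|
      ≤ ∑ j ∈ range n, |pgf (e j) (compGF q (j + 1) n s)
          - Real.exp (pgf (e j) (compGF q (j + 1) n s) - 1)| :=
        my_abs_prod_sub_prod_le _ _
          (fun j => (hamem n j).1) (fun j => (hamem n j).2)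
          (fun j => (Real.exp_pos _).le)
          (fun j => by rw [Real.exp_le_one_iff]; linarith [(hamem n j).2]) n
    _ ≤ ∑ j ∈ range n,
          ((∑' i : ℕ, (i : ℝ) * e j i) ^ 2) * (∏ i ∈ Ico (j + 1) n, pmean (p i)) ^ 2 :=
        Finset.sum_le_sum (fun j _ => step2 j)
    _ = (∑ j ∈ Ico 0 N,
          ((∑' i : ℕ, (i : ℝ) * e j i) ^ 2) * (∏ i ∈ Ico (j + 1) n, pmean (p i)) ^ 2)
        + ∑ j ∈ Ico N n,
          ((∑' i : ℕ, (i : ℝ) * e j i) ^ 2) * (∏ i ∈ Ico (j + 1) n, pmean (p i)) ^ 2 := by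
        rw [Finset.range_eq_Ico, Finset.sum_Ico_consecutive _ (Nat.zero_le N) hNn]
    _ < ε / 2 + ε / 2 := by
        apply add_lt_add_of_lt_of_le (lt_of_le_of_lt hhead hKGn) htail
    _ = ε := by ring
end

section
/- Let ν>0 and let n, j be integers with 1 ≤ n < j. Then ((1+2/ν)^j − 1)·(ν/(2+ν))^n / n − ∑_{k=n+1}^{j} (2/ν)^k C(j,k) ∑_{i=n}^{k−1} (−1)^{i+n} C(i,n) ν^i/(i·2^i) = (1/n)·(1 − (ν/(2+ν))^n). -/
/-!
Put `x = 2 / ν`, so that `ν / (2 + ν) = (1 + x)⁻¹` and `ν ^ i / (i * 2 ^ i) = 1 / (i * x ^ i)`.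
The claim then says that `T j = ∑ₖ x ^ k C(j, k) Sₖ`, with `Sₖ = ∑_{i < k} (-1)^(i+n) C(i, n) / (i xⁱ)`,
equals `((1 + x) ^ (j - n) - 1) / n`. Pascal's rule gives
`T (j + 1) = (1 + x) T j + x ∑ₖ (-1)^(k+n) C(j, k) C(k, n) / k`. The last sum is `1 / n`: by
Pascal's rule again and `C(k+1, n) / (k+1) = C(k, n-1) / n`, its increments in `j` are the
binomial-inversion sums `∑ₛ (-1)^(s+r) C(j, s) C(s, r) = δ_{jr}` with `r = n - 1`.
-/

open Finset

theorem sum_range_neg_one_pow_mul_choose_mul_choose {R : Type*} [CommRing R] (j r : ℕ) :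
    ∑ s ∈ range (j + 1), (-1 : R) ^ (s + r) * j.choose s * s.choose r =
      if j = r then 1 else 0 := by
  induction j generalizing r with
  | zero => cases r <;> simp
  | succ j ih =>
    have pascal := sum_choose_succ_mul (fun s _ ↦ (-1 : R) ^ (s + r) * s.choose r) j
    simp only [mul_left_comm ((Nat.choose _ _ : ℕ) : R) ((-1 : R) ^ _), ← mul_assoc] at pascal
    rw [pascal, ← sum_add_distrib]
    cases r with
    | zero =>
      refine sum_eq_zero fun s _ ↦ ?_
      simp only [Nat.choose_zero_right, pow_succ]
      ring
    | succ r =>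
      simp only [Nat.add_right_cancel_iff, ← ih r]
      refine sum_congr rfl fun s _ ↦ ?_
      rw [Nat.choose_succ_succ]
      push_cast
      ring

theorem sum_range_neg_one_pow_mul_choose_mul_choose_div {K : Type*} [Field K] [CharZero K]
    {n j : ℕ} (hn : 1 ≤ n) (hj : n ≤ j) :
    ∑ k ∈ range (j + 1), (-1 : K) ^ (k + n) * j.choose k * k.choose n / k = 1 / n := by
  obtain ⟨m, rfl⟩ : ∃ m, n = m + 1 := ⟨n - 1, by omega⟩
  have choose_div (k : ℕ) : ((k + 1).choose (m + 1) : K) / (k + 1) = k.choose m / (m + 1) := by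
    rw [div_eq_div_iff (Nat.cast_add_one_ne_zero k) (Nat.cast_add_one_ne_zero m)]
    exact_mod_cast (Nat.add_one_mul_choose_eq k m).symm.trans (mul_comm _ _)
  have step (j : ℕ) :
      ∑ k ∈ range (j + 2), (-1 : K) ^ (k + (m + 1)) * (j + 1).choose k * k.choose (m + 1) / k =
        ∑ k ∈ range (j + 1), (-1 : K) ^ (k + (m + 1)) * j.choose k * k.choose (m + 1) / k +
        (∑ k ∈ range (j + 1), (-1 : K) ^ (k + m) * j.choose k * k.choose m) / (m + 1) := by
    have pascal := sum_choose_succ_mul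
      (fun k _ ↦ (-1 : K) ^ (k + (m + 1)) * k.choose (m + 1) / k) j
    simp only [mul_div_assoc, mul_left_comm ((Nat.choose _ _ : ℕ) : K) ((-1 : K) ^ _),
      ← mul_assoc] at pascal
    push_cast at pascal
    simp only [mul_div_assoc]
    rw [pascal, sum_div]
    congr 1
    refine sum_congr rfl fun k _ ↦ ?_
    rw [choose_div]
    ring
  induction j, hj using Nat.le_induction with
  | base =>
    have vanish : ∑ k ∈ range (m + 1), (-1 : K) ^ (k + (m + 1)) * m.choose k *
        k.choose (m + 1) / k = 0 :=
      sum_eq_zero fun k hk ↦ by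
        rw [Nat.choose_eq_zero_of_lt (n := k) (by grind), Nat.cast_zero, mul_zero, zero_div]
    rw [step, vanish, sum_range_neg_one_pow_mul_choose_mul_choose, if_pos rfl]
    push_cast
    ring
  | succ j hj ih =>
    rw [step, ih, sum_range_neg_one_pow_mul_choose_mul_choose, if_neg (by omega)]
    ring

theorem sum_range_pow_mul_choose_mul_succ {R : Type*} [CommRing R] (x : R) (S : ℕ → R) (j : ℕ) :
    ∑ k ∈ range (j + 2), x ^ k * (j + 1).choose k * S k =
      (1 + x) * ∑ k ∈ range (j + 1), x ^ k * j.choose k * S k +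
        ∑ k ∈ range (j + 1), x ^ (k + 1) * j.choose k * (S (k + 1) - S k) := by
  have pascal := sum_choose_succ_mul (fun k _ ↦ x ^ k * S k) j
  simp only [mul_left_comm ((Nat.choose _ _ : ℕ) : R) (x ^ _), ← mul_assoc] at pascal
  rw [pascal, add_mul, one_mul, add_assoc]
  congr 1
  rw [mul_sum, ← sum_add_distrib]
  exact sum_congr rfl fun k _ ↦ by ring

theorem sum_range_neg_one_pow_mul_choose_div_eq_zero {K : Type*} [Field K] (x : K) {n k : ℕ}
    (hk : k ≤ n) : ∑ i ∈ range k, (-1 : K) ^ (i + n) * i.choose n / (i * x ^ i) = 0 :=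
  sum_eq_zero fun i hi ↦ by
    rw [Nat.choose_eq_zero_of_lt (by grind), Nat.cast_zero, mul_zero, zero_div]

theorem sum_range_pow_mul_choose_mul_sum_range {K : Type*} [Field K] [CharZero K] {x : K}
    (hx : x ≠ 0) {n j : ℕ} (hn : 1 ≤ n) (hj : n ≤ j) :
    ∑ k ∈ range (j + 1), x ^ k * j.choose k *
        ∑ i ∈ range k, (-1 : K) ^ (i + n) * i.choose n / (i * x ^ i) =
      ((1 + x) ^ (j - n) - 1) / n := by
  induction j, hj using Nat.le_induction with
  | base =>
    rw [Nat.sub_self, pow_zero, sub_self, zero_div]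
    exact sum_eq_zero fun k hk ↦ mul_eq_zero_of_right _
      (sum_range_neg_one_pow_mul_choose_div_eq_zero x (by grind))
  | succ j hj ih =>
    have increment (k : ℕ) :
        x ^ (k + 1) * j.choose k * ((-1 : K) ^ (k + n) * k.choose n / (k * x ^ k)) =
          x * ((-1) ^ (k + n) * j.choose k * k.choose n / k) := by
      rw [mul_comm (k : K), ← div_div, pow_succ]
      field_simp
    rw [sum_range_pow_mul_choose_mul_succ, ih]
    simp only [sum_range_succ_sub_sum, increment]
    rw [← mul_sum, sum_range_neg_one_pow_mul_choose_mul_choose_div hn hj, Nat.sub_add_comm hj,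
      pow_succ]
    ring

/-- For `ν > 0` and integers `1 ≤ n < j`,
`((1+2/ν)^j − 1)·(ν/(2+ν))^n / n
  − ∑_{k=n+1}^{j} (2/ν)^k C(j,k) ∑_{i=n}^{k−1} (−1)^{i+n} C(i,n) ν^i/(i·2^i)
  = (1/n)·(1 − (ν/(2+ν))^n)`. -/
theorem binomial_double_sum_identity (ν : ℝ) (hν : 0 < ν) (n j : ℕ)
    (hn : 1 ≤ n) (hj : n < j) :
    ((1 + 2 / ν) ^ j - 1) * (ν / (2 + ν)) ^ n / (n : ℝ) -
        ∑ k ∈ Finset.Icc (n + 1) j, (2 / ν) ^ k * (j.choose k : ℝ) *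
          ∑ i ∈ Finset.Ico n k,
            (-1 : ℝ) ^ (i + n) * (i.choose n : ℝ) * (ν ^ i / ((i : ℝ) * 2 ^ i))
      = (1 / (n : ℝ)) * (1 - (ν / (2 + ν)) ^ n) := by
  have inner (k : ℕ) : ∑ i ∈ Ico n k, (-1 : ℝ) ^ (i + n) * i.choose n * (ν ^ i / (i * 2 ^ i)) =
      ∑ i ∈ range k, (-1 : ℝ) ^ (i + n) * i.choose n / (i * (2 / ν) ^ i) := by
    rw [← sum_subset (fun i hi ↦ mem_range.2 (mem_Ico.1 hi).2) fun i hi hi' ↦ ?_]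
    · exact sum_congr rfl fun i _ ↦ by
        rw [div_pow, mul_div_assoc', mul_div_assoc', div_div_eq_mul_div]
    · rw [Nat.choose_eq_zero_of_lt (by grind), Nat.cast_zero, mul_zero, zero_div]
  have outer : ∑ k ∈ Icc (n + 1) j, (2 / ν) ^ k * (j.choose k : ℝ) *
        ∑ i ∈ range k, (-1 : ℝ) ^ (i + n) * i.choose n / (i * (2 / ν) ^ i) =
      ∑ k ∈ range (j + 1), (2 / ν) ^ k * (j.choose k : ℝ) *
        ∑ i ∈ range k, (-1 : ℝ) ^ (i + n) * i.choose n / (i * (2 / ν) ^ i) :=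
    sum_subset (fun k hk ↦ by grind) fun k hk hk' ↦ by
      rw [sum_range_neg_one_pow_mul_choose_div_eq_zero _ (by grind), mul_zero]
  have ratio : ν / (2 + ν) = (1 + 2 / ν)⁻¹ := by
    field_simp
    ring
  have hz : 1 + 2 / ν ≠ 0 := by positivity
  simp only [inner]
  rw [outer, sum_range_pow_mul_choose_mul_sum_range (by positivity) hn hj.le, ratio,
    ← pow_sub_mul_pow (1 + 2 / ν) hj.le]
  generalize 1 + 2 / ν = z at hz ⊢
  rw [inv_pow]
  field_simp
  ring
end

section
/- For every real x>0 and all integers 1 ≤ n < k, | ∑_{i=n}^{k−1} (−1)^{i+n} C(i,n) x^{i−n}/i − n^{−1}(1+x)^{−n} | ≤ n^{−1} C(k−1, k−n) x^{k−n}. -/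
/-!
Multiplied by `n`, and using `n * C(i, n) = i * C(i - 1, n - 1)`, the sum is the Taylor polynomial
at `0` of `t ↦ (1 + t)⁻ⁿ` of degree `K - 1`, where `K = k - n`: the `m`-th derivative is
`(-1)ᵐ n(n+1)⋯(n+m-1) (1 + t)^(-n-m)`, so the `m`-th coefficient is `(-1)ᵐ C(n+m-1, m)`.
For `t ≥ 0` the `K`-th derivative is bounded by `n(n+1)⋯(n+K-1) = K! C(n+K-1, K)`, and the
Lagrange form of the remainder gives the bound.
-/

open Set
open scoped Nat

section Derivatives

variable {𝕜 : Type*} [NontriviallyNormedField 𝕜]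

theorem prod_range_neg_natCast_sub (n k : ℕ) :
    ∏ i ∈ Finset.range k, (-(n : 𝕜) - i) = (-1) ^ k * n.ascFactorial k := by
  calc ∏ i ∈ Finset.range k, (-(n : 𝕜) - i) = ∏ i ∈ Finset.range k, (-1) * ((n + i : ℕ) : 𝕜) :=
        Finset.prod_congr rfl fun i _ => by push_cast; ring
    _ = (-1) ^ k * n.ascFactorial k := by
        rw [Finset.prod_mul_distrib, Finset.prod_const, Finset.card_range,
          Nat.ascFactorial_eq_prod_range, Nat.cast_prod]

theorem iteratedDeriv_inv_one_add_pow (n k : ℕ) (t : 𝕜) :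
    iteratedDeriv k (fun t => ((1 + t) ^ n)⁻¹) t =
      (-1) ^ k * n.ascFactorial k * ((1 + t) ^ (n + k))⁻¹ := by
  have hzpow : (fun t : 𝕜 => ((1 + t) ^ n)⁻¹) = fun t => (1 + t) ^ (-(n : ℤ)) := by
    simp only [zpow_neg, zpow_natCast]
  rw [hzpow, iteratedDeriv_comp_const_add k (fun u : 𝕜 => u ^ (-(n : ℤ))) 1]
  beta_reduce
  rw [iteratedDeriv_eq_iterate, iter_deriv_zpow, Int.cast_neg, Int.cast_natCast,
    prod_range_neg_natCast_sub, ← neg_add', ← Nat.cast_add, zpow_neg, zpow_natCast]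

theorem contDiffAt_inv_one_add_pow (n : ℕ) (m : WithTop ℕ∞) {t : 𝕜} (ht : 1 + t ≠ 0) :
    ContDiffAt 𝕜 m (fun t => ((1 + t) ^ n)⁻¹) t :=
  ((contDiffAt_const.add contDiffAt_id).pow n).inv (pow_ne_zero n ht)

end Derivatives

theorem abs_iteratedDeriv_inv_one_add_pow_le (n k : ℕ) {t : ℝ} (ht : 0 ≤ t) :
    |iteratedDeriv k (fun t : ℝ => ((1 + t) ^ n)⁻¹) t| ≤ n.ascFactorial k := by
  have hpow_inv : ((1 + t) ^ (n + k))⁻¹ ≤ 1 := inv_le_one_of_one_le₀ (one_le_pow₀ (by linarith))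
  rw [iteratedDeriv_inv_one_add_pow, abs_mul, abs_mul, abs_neg_one_pow, one_mul, Nat.abs_cast,
    abs_of_pos (by positivity)]
  exact mul_le_of_le_one_right (Nat.cast_nonneg _) hpow_inv

theorem iteratedDerivWithin_Icc_inv_one_add_pow (n k : ℕ) {x t : ℝ} (hx : 0 < x)
    (ht : t ∈ Icc 0 x) :
    iteratedDerivWithin k (fun t => ((1 + t) ^ n)⁻¹) (Icc 0 x) t =
      iteratedDeriv k (fun t => ((1 + t) ^ n)⁻¹) t :=
  iteratedDerivWithin_eq_iteratedDeriv (uniqueDiffOn_Icc hx)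
    (contDiffAt_inv_one_add_pow n k (by linarith [ht.1])) ht

theorem taylorWithinEval_inv_one_add_pow (n J : ℕ) {x : ℝ} (hx : 0 < x) :
    taylorWithinEval (fun t => ((1 + t) ^ n)⁻¹) J (Icc 0 x) 0 x =
      ∑ m ∈ Finset.range (J + 1), (-1) ^ m * ((n + m - 1).choose m : ℝ) * x ^ m := by
  rw [taylor_within_apply]
  refine Finset.sum_congr rfl fun m _ => ?_
  rw [iteratedDerivWithin_Icc_inv_one_add_pow n m hx ⟨le_rfl, hx.le⟩,
    iteratedDeriv_inv_one_add_pow, Nat.ascFactorial_eq_factorial_mul_choose']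
  simp only [smul_eq_mul, sub_zero, add_zero, one_pow, inv_one, mul_one, Nat.cast_mul]
  field_simp

theorem abs_inv_one_add_pow_sub_taylorWithinEval_le (n J : ℕ) {x : ℝ} (hx : 0 < x) :
    |((1 + x) ^ n)⁻¹ - taylorWithinEval (fun t => ((1 + t) ^ n)⁻¹) J (Icc 0 x) 0 x| ≤
      (n + J).choose (J + 1) * x ^ (J + 1) := by
  have hsmooth : ContDiffOn ℝ ⊤ (fun t : ℝ => ((1 + t) ^ n)⁻¹) (Icc 0 x) := fun t ht =>
    (contDiffAt_inv_one_add_pow n ⊤ (by linarith [ht.1])).contDiffWithinAt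
  have hdiff := (hsmooth.differentiableOn_iteratedDerivWithin (m := J) (WithTop.coe_lt_top _)
    (uniqueDiffOn_Icc hx)).mono Ioo_subset_Icc_self
  obtain ⟨y, hy, hremainder⟩ := taylor_mean_remainder_lagrange hx.ne
    (by rw [uIcc_of_le hx.le]; exact hsmooth.of_le le_top)
    (by rwa [uIcc_of_le hx.le, uIoo_of_le hx.le])
  rw [uIoo_of_le hx.le] at hy
  rw [uIcc_of_le hx.le] at hremainder
  rw [hremainder, iteratedDerivWithin_Icc_inv_one_add_pow _ _ hx (Ioo_subset_Icc_self hy),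
    sub_zero, abs_div, abs_mul, abs_pow, abs_of_pos hx, Nat.abs_cast,
    div_le_iff₀ (by positivity)]
  calc |iteratedDeriv (J + 1) (fun t : ℝ => ((1 + t) ^ n)⁻¹) y| * x ^ (J + 1)
      ≤ n.ascFactorial (J + 1) * x ^ (J + 1) := by
        gcongr; exact abs_iteratedDeriv_inv_one_add_pow_le n (J + 1) hy.1.le
    _ = (n + J).choose (J + 1) * x ^ (J + 1) * (J + 1)! := by
        rw [Nat.ascFactorial_eq_factorial_mul_choose', ← add_assoc, Nat.add_sub_cancel]
        push_cast; ring

theorem Nat.mul_add_choose_eq_add_mul_choose {n : ℕ} (hn : 1 ≤ n) (m : ℕ) :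
    n * (n + m).choose n = (n + m) * (n + m - 1).choose m := by
  obtain ⟨a, rfl⟩ := Nat.exists_eq_add_of_le' hn
  have h := Nat.add_one_mul_choose_eq (a + m) a
  rw [Nat.choose_symm_add] at h
  rw [show a + 1 + m - 1 = a + m by omega, show a + 1 + m = a + m + 1 by omega, h, mul_comm]

theorem sum_Ico_neg_one_pow_mul_choose_div (x : ℝ) {n : ℕ} (hn : 1 ≤ n) (K : ℕ) :
    ∑ i ∈ Finset.Ico n (n + K), (-1 : ℝ) ^ (i + n) * (i.choose n : ℝ) * x ^ (i - n) / (i : ℝ) =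
      (n : ℝ)⁻¹ * ∑ m ∈ Finset.range K, (-1) ^ m * ((n + m - 1).choose m : ℝ) * x ^ m := by
  rw [Finset.sum_Ico_eq_sum_range, Nat.add_sub_cancel_left, Finset.mul_sum]
  refine Finset.sum_congr rfl fun m _ => ?_
  have hchoose : (n : ℝ) * (n + m).choose n = (n + m) * (n + m - 1).choose m := by
    exact_mod_cast Nat.mul_add_choose_eq_add_mul_choose hn m
  rw [Nat.add_sub_cancel_left, show n + m + n = m + 2 * n by ring, pow_add, pow_mul, neg_one_sq,
    one_pow, mul_one]
  field_simp
  push_cast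
  linear_combination x ^ m * hchoose

/-- For every real `x > 0` and all integers `1 ≤ n < k`,
`| ∑_{i=n}^{k−1} (−1)^{i+n} C(i,n) x^{i−n}/i − n⁻¹(1+x)^{−n} | ≤ n⁻¹ C(k−1, k−n) x^{k−n}`. -/
theorem taylor_remainder_bound (x : ℝ) (hx : 0 < x) (n k : ℕ)
    (hn : 1 ≤ n) (hk : n < k) :
    |(∑ i ∈ Finset.Ico n k, (-1 : ℝ) ^ (i + n) * (i.choose n : ℝ) * x ^ (i - n) / (i : ℝ)) -
        (n : ℝ)⁻¹ * ((1 + x) ^ n)⁻¹| ≤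
      (n : ℝ)⁻¹ * ((k - 1).choose (k - n) : ℝ) * x ^ (k - n) := by
  obtain ⟨J, rfl⟩ : ∃ J, k = n + (J + 1) := ⟨k - n - 1, by omega⟩
  rw [sum_Ico_neg_one_pow_mul_choose_div x hn, ← taylorWithinEval_inv_one_add_pow n J hx,
    ← mul_sub, abs_mul, abs_sub_comm, abs_of_pos (by positivity), mul_assoc,
    show n + (J + 1) - 1 = n + J by omega, Nat.add_sub_cancel_left]
  gcongr
  exact abs_inv_one_add_pow_sub_taylorWithinEval_le n J hx
end

section
/- Let (f̄_n)_{n≥1} satisfy (C1): 0<f̄_n<1, f̄_n→1, ∑_n(1−f̄_n)=∞. Fix ν≥0, s∈[0,1), and an integer k≥1, and set a_{n,j}^{(k)} = (1−f̄_j)∏_{i=j+1}^n f̄_i^k and f̄_{j,n} = ∏_{i=j+1}^n f̄_i. Then lim_{n→∞} ∑_{j=1}^{n} a_{n,j}^{(k)} ( 1/(1−s) + (ν/2)(1−f̄_{j,n}) )^{−k} = ∫_0^1 y^{k−1} ( 1/(1−s) + (ν/2)(1−y) )^{−k} dy. -/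
open Filter Topology

lemma aux_prod_pos (fbar : ℕ → ℝ) (hpos : ∀ n, 0 < fbar n) (m n : ℕ) :
    0 < ∏ i ∈ Finset.Ico m n, fbar i :=
  Finset.prod_pos fun i _ => hpos i

lemma aux_prod_le_one (fbar : ℕ → ℝ) (hpos : ∀ n, 0 < fbar n) (hlt : ∀ n, fbar n < 1)
    (m n : ℕ) : ∏ i ∈ Finset.Ico m n, fbar i ≤ 1 :=
  Finset.prod_le_one (fun i _ => (hpos i).le) (fun i _ => (hlt i).le)

lemma aux_prod_tendsto_zero (fbar : ℕ → ℝ) (hpos : ∀ n, 0 < fbar n) (hlt : ∀ n, fbar n < 1)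
    (hdiv : ¬ Summable (fun n => 1 - fbar n)) (m : ℕ) :
    Tendsto (fun n => ∏ i ∈ Finset.Ico m n, fbar i) atTop (𝓝 0) := by
  have hnn : ∀ i, 0 ≤ 1 - fbar i := fun i => by linarith [hlt i]
  have hS : Tendsto (fun n => ∑ i ∈ Finset.range n, (1 - fbar i)) atTop atTop :=
    (not_summable_iff_tendsto_nat_atTop_of_nonneg hnn).mp hdiv
  have hS' : Tendsto (fun n => ∑ i ∈ Finset.Ico m n, (1 - fbar i)) atTop atTop := by
    apply Tendsto.congr' (f₁ := fun n => ∑ i ∈ Finset.range n, (1 - fbar i)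
        - ∑ i ∈ Finset.range m, (1 - fbar i))
    · filter_upwards [eventually_ge_atTop m] with n hn
      rw [Finset.sum_Ico_eq_sub _ hn]
    · exact tendsto_atTop_add_const_right _ _ hS
  have hbound : ∀ n, ∏ i ∈ Finset.Ico m n, fbar i
      ≤ Real.exp (-(∑ i ∈ Finset.Ico m n, (1 - fbar i))) := by
    intro n
    have : ∀ i ∈ Finset.Ico m n, fbar i ≤ Real.exp (-(1 - fbar i)) := by
      intro i _
      have := Real.add_one_le_exp (fbar i - 1)
      have h2 : -(1 - fbar i) = fbar i - 1 := by ring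
      rw [h2]; linarith
    calc ∏ i ∈ Finset.Ico m n, fbar i ≤ ∏ i ∈ Finset.Ico m n, Real.exp (-(1 - fbar i)) :=
          Finset.prod_le_prod (fun i _ => (hpos i).le) this
      _ = Real.exp (∑ i ∈ Finset.Ico m n, -(1 - fbar i)) := (Real.exp_sum _ _).symm
      _ = Real.exp (-(∑ i ∈ Finset.Ico m n, (1 - fbar i))) := by rw [Finset.sum_neg_distrib]
  have hexp : Tendsto (fun n => Real.exp (-(∑ i ∈ Finset.Ico m n, (1 - fbar i)))) atTop (𝓝 0) :=
    Real.tendsto_exp_atBot.comp (tendsto_neg_atTop_atBot.comp hS')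
  exact squeeze_zero (fun n => (aux_prod_pos fbar hpos m n).le) hbound hexp

lemma aux_mesh (fbar : ℕ → ℝ) (hpos : ∀ n, 0 < fbar n) (hlt : ∀ n, fbar n < 1)
    (hto1 : Tendsto fbar atTop (𝓝 1))
    (hdiv : ¬ Summable (fun n => 1 - fbar n)) {ε : ℝ} (hε : 0 < ε) :
    ∀ᶠ n in atTop, ∀ j < n, (1 - fbar j) * ∏ i ∈ Finset.Ico (j + 1) n, fbar i < ε := by
  have h1 : ∀ᶠ j in atTop, 1 - ε < fbar j :=
    hto1.eventually (eventually_gt_nhds (by linarith))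
  obtain ⟨J, hJ⟩ := eventually_atTop.mp h1
  have h2 : ∀ᶠ n in atTop, ∏ i ∈ Finset.Ico (J + 1) n, fbar i < ε :=
    (aux_prod_tendsto_zero fbar hpos hlt hdiv (J + 1)).eventually (eventually_lt_nhds hε)
  obtain ⟨N, hN⟩ := eventually_atTop.mp h2
  filter_upwards [eventually_ge_atTop (max N (J + 1))] with n hn j hj
  have hP0 : 0 < ∏ i ∈ Finset.Ico (j + 1) n, fbar i := aux_prod_pos fbar hpos _ _
  have hP1 : ∏ i ∈ Finset.Ico (j + 1) n, fbar i ≤ 1 := aux_prod_le_one fbar hpos hlt _ _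
  have hfj : 0 ≤ 1 - fbar j := by linarith [hlt j]
  by_cases hjJ : j ≤ J
  · have hsplit : (∏ i ∈ Finset.Ico (j + 1) (J + 1), fbar i) *
        ∏ i ∈ Finset.Ico (J + 1) n, fbar i = ∏ i ∈ Finset.Ico (j + 1) n, fbar i :=
      Finset.prod_Ico_consecutive _ (by omega) (le_trans (le_max_right _ _) hn)
    have h3 : ∏ i ∈ Finset.Ico (J + 1) n, fbar i < ε := hN n (le_trans (le_max_left _ _) hn)
    have h4 : (∏ i ∈ Finset.Ico (j + 1) (J + 1), fbar i) ≤ 1 := aux_prod_le_one fbar hpos hlt _ _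
    have h5 : 0 < ∏ i ∈ Finset.Ico (J + 1) n, fbar i := aux_prod_pos fbar hpos _ _
    have h7 : (1 - fbar j) * ∏ i ∈ Finset.Ico (j + 1) n, fbar i
        ≤ ∏ i ∈ Finset.Ico (j + 1) n, fbar i :=
      mul_le_of_le_one_left hP0.le (by linarith [hpos j])
    have h8 : ∏ i ∈ Finset.Ico (j + 1) n, fbar i ≤ ∏ i ∈ Finset.Ico (J + 1) n, fbar i := by
      rw [← hsplit]; exact mul_le_of_le_one_left h5.le h4
    linarith
  · have h3 : 1 - fbar j < ε := by linarith [hJ j (by omega)]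
    nlinarith

lemma aux_den_pos {C D y : ℝ} (hC : 0 < C) (hD : 0 ≤ D) (hy : y ≤ 1) :
    0 < C + D * (1 - y) := by nlinarith

lemma aux_h_mono (C D : ℝ) (hC : 0 < C) (hD : 0 ≤ D) (k : ℕ) :
    MonotoneOn (fun y => y ^ (k - 1) / (C + D * (1 - y)) ^ k) (Set.Icc (0:ℝ) 1) := by
  intro x hx y hy hxy
  have hdy : 0 < C + D * (1 - y) := aux_den_pos hC hD hy.2
  have hdx : C + D * (1 - y) ≤ C + D * (1 - x) := by nlinarith
  exact div_le_div₀ (pow_nonneg (hx.1.trans hxy) _)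
    (pow_le_pow_left₀ hx.1 hxy _) (pow_pos hdy _) (pow_le_pow_left₀ hdy.le hdx _)

lemma aux_h_cont (C D : ℝ) (hC : 0 < C) (hD : 0 ≤ D) (k : ℕ) :
    ContinuousOn (fun y => y ^ (k - 1) / (C + D * (1 - y)) ^ k) (Set.Icc (0:ℝ) 1) := by
  apply ContinuousOn.div (by fun_prop) (by fun_prop)
  intro y hy
  exact pow_ne_zero _ (ne_of_gt (aux_den_pos hC hD hy.2))

lemma aux_h_nonneg (C D : ℝ) (hC : 0 < C) (hD : 0 ≤ D) (k : ℕ) {y : ℝ}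
    (hy : y ∈ Set.Icc (0:ℝ) 1) : 0 ≤ y ^ (k - 1) / (C + D * (1 - y)) ^ k :=
  div_nonneg (pow_nonneg hy.1 _) (pow_nonneg (aux_den_pos hC hD hy.2).le _)

/-- Under (C1), the Riemann sums
`∑_{j=1}^n a_{n,j}^{(k)} (1/(1−s) + (ν/2)(1−f̄_{j,n}))^{−k}` converge to
`∫_0^1 y^{k−1} (1/(1−s) + (ν/2)(1−y))^{−k} dy`.
Here generations are indexed from `0`, so `a_{n,j}^{(k)} = (1−f̄_j)∏_{i=j+1}^{n} f̄_i^k`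
becomes `(1 - fbar j) * ∏_{i ∈ Ico (j+1) n} (fbar i)^k` for `j ∈ range n`, and
`f̄_{j,n} = ∏_{i ∈ Ico (j+1) n} fbar i`. -/
theorem riemann_sum_convergence (fbar : ℕ → ℝ) (ν s : ℝ) (k : ℕ)
    (hpos : ∀ n, 0 < fbar n) (hlt : ∀ n, fbar n < 1)
    (hto1 : Tendsto fbar atTop (𝓝 1))
    (hdiv : ¬ Summable (fun n => 1 - fbar n))
    (hν : 0 ≤ ν) (hs : s ∈ Set.Ico (0 : ℝ) 1) (hk : 1 ≤ k) :
    Tendsto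
      (fun n => ∑ j ∈ Finset.range n,
        ((1 - fbar j) * ∏ i ∈ Finset.Ico (j + 1) n, (fbar i) ^ k) /
          (1 / (1 - s) + ν / 2 * (1 - ∏ i ∈ Finset.Ico (j + 1) n, fbar i)) ^ k)
      atTop
      (𝓝 (∫ y in (0 : ℝ)..1, y ^ (k - 1) / (1 / (1 - s) + ν / 2 * (1 - y)) ^ k)) := by
  obtain ⟨hs0, hs1⟩ := hs
  set C : ℝ := 1 / (1 - s) with hCdef
  have hC : 0 < C := by
    have h1s : (0:ℝ) < 1 - s := by linarith
    positivity
  set D : ℝ := ν / 2 with hDdef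
  have hD : 0 ≤ D := by positivity
  set h : ℝ → ℝ := fun y => y ^ (k - 1) / (C + D * (1 - y)) ^ k with hhdef
  have hmono := aux_h_mono C D hC hD k
  have hcont := aux_h_cont C D hC hD k
  have hnn : ∀ y ∈ Set.Icc (0:ℝ) 1, 0 ≤ h y := fun y hy => aux_h_nonneg C D hC hD k hy
  set P : ℕ → ℕ → ℝ := fun n j => ∏ i ∈ Finset.Ico j n, fbar i with hPdef
  have hPpos : ∀ n j, 0 < P n j := fun n j => aux_prod_pos fbar hpos j n
  have hPle1 : ∀ n j, P n j ≤ 1 := fun n j => aux_prod_le_one fbar hpos hlt j n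
  have hPmem : ∀ n j, P n j ∈ Set.Icc (0:ℝ) 1 := fun n j => ⟨(hPpos n j).le, hPle1 n j⟩
  have h0mem : (0:ℝ) ∈ Set.Icc (0:ℝ) 1 := ⟨le_refl 0, zero_le_one⟩
  have h1mem : (1:ℝ) ∈ Set.Icc (0:ℝ) 1 := ⟨zero_le_one, le_refl 1⟩
  have hPn : ∀ n, P n n = 1 := fun n => by simp [hPdef]
  have hstep : ∀ n j, j < n → P n j = fbar j * P n (j + 1) := by
    intro n j hj
    simp only [hPdef]
    exact Finset.prod_eq_prod_Ico_succ_bot hj _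
  have hPadj : ∀ n j, j < n → P n j ≤ P n (j + 1) := by
    intro n j hj
    rw [hstep n j hj]
    exact mul_le_of_le_one_left (hPpos n (j + 1)).le (hlt j).le
  -- rewrite of the summand
  have hsum : ∀ n, (∑ j ∈ Finset.range n,
      ((1 - fbar j) * ∏ i ∈ Finset.Ico (j + 1) n, (fbar i) ^ k) /
        (C + D * (1 - ∏ i ∈ Finset.Ico (j + 1) n, fbar i)) ^ k)
      = ∑ j ∈ Finset.range n, (P n (j + 1) - P n j) * h (P n (j + 1)) := by
    intro n
    apply Finset.sum_congr rfl
    intro j hj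
    have hj' := Finset.mem_range.mp hj
    rw [hstep n j hj']
    simp only [hhdef, hPdef]
    rw [Finset.prod_pow]
    set Q : ℝ := ∏ i ∈ Finset.Ico (j + 1) n, fbar i with hQdef
    have hQ : Q ^ k = Q ^ (k - 1) * Q := by
      rw [← pow_succ]; congr 1; omega
    rw [hQ]; ring
  -- integrability
  have hintg : ∀ a b : ℝ, a ∈ Set.Icc (0:ℝ) 1 → b ∈ Set.Icc (0:ℝ) 1 →
      IntervalIntegrable h MeasureTheory.volume a b := by
    intro a b ha hb
    apply ContinuousOn.intervalIntegrable
    apply hcont.mono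
    exact Set.uIcc_subset_Icc ha hb
  -- per-interval bounds
  have hupp : ∀ a b : ℝ, a ∈ Set.Icc (0:ℝ) 1 → b ∈ Set.Icc (0:ℝ) 1 → a ≤ b →
      ∫ x in a..b, h x ≤ (b - a) * h b := by
    intro a b ha hb hab
    have hmle : ∫ x in a..b, h x ≤ ∫ x in a..b, h b := by
      apply intervalIntegral.integral_mono_on hab (hintg a b ha hb) intervalIntegrable_const
      intro x hx
      exact hmono ⟨ha.1.trans hx.1, hx.2.trans hb.2⟩ hb hx.2
    rw [intervalIntegral.integral_const, smul_eq_mul] at hmle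
    exact hmle
  have hlow : ∀ a b : ℝ, a ∈ Set.Icc (0:ℝ) 1 → b ∈ Set.Icc (0:ℝ) 1 → a ≤ b →
      (b - a) * h a ≤ ∫ x in a..b, h x := by
    intro a b ha hb hab
    have hmle : ∫ x in a..b, h a ≤ ∫ x in a..b, h x := by
      apply intervalIntegral.integral_mono_on hab intervalIntegrable_const (hintg a b ha hb)
      intro x hx
      exact hmono ha ⟨ha.1.trans hx.1, hx.2.trans hb.2⟩ hx.1
    rw [intervalIntegral.integral_const, smul_eq_mul] at hmle
    exact hmle
  -- telescoping integral
  have hI : ∀ n, ∫ x in (P n 0)..1, h x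
      = ∑ j ∈ Finset.range n, ∫ x in (P n j)..(P n (j + 1)), h x := by
    intro n
    have := intervalIntegral.sum_integral_adjacent_intervals
      (f := h) (μ := MeasureTheory.volume) (a := fun j => P n j) (n := n)
      (fun i _ => hintg _ _ (hPmem n i) (hPmem n (i + 1)))
    calc ∫ x in (P n 0)..1, h x = ∫ x in (P n 0)..(P n n), h x := by rw [hPn n]
      _ = _ := this.symm
  -- main convergence for the rewritten sums
  have main : Tendsto (fun n => ∑ j ∈ Finset.range n, (P n (j + 1) - P n j) * h (P n (j + 1)))
      atTop (𝓝 (∫ y in (0:ℝ)..1, h y)) := by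
    rw [Metric.tendsto_atTop]
    intro ε hε
    set ε' : ℝ := ε / (2 * (h 1 + 1)) with hε'def
    have h1nn : 0 ≤ h 1 := hnn 1 h1mem
    have hε' : 0 < ε' := by positivity
    obtain ⟨N1, hN1⟩ := eventually_atTop.mp (aux_mesh fbar hpos hlt hto1 hdiv hε')
    obtain ⟨N2, hN2⟩ := eventually_atTop.mp
      ((aux_prod_tendsto_zero fbar hpos hlt hdiv 0).eventually (eventually_lt_nhds hε'))
    refine ⟨max N1 N2, fun n hn => ?_⟩
    have hn1 := hN1 n (le_trans (le_max_left _ _) hn)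
    have hn2 : P n 0 < ε' := hN2 n (le_trans (le_max_right _ _) hn)
    have hmesh : ∀ j < n, P n (j + 1) - P n j < ε' := by
      intro j hj
      have hterm := hn1 j hj
      rw [hstep n j hj]
      calc P n (j + 1) - fbar j * P n (j + 1) = (1 - fbar j) * P n (j + 1) := by ring
        _ < ε' := hterm
    have hlowS : ∫ x in (P n 0)..1, h x
        ≤ ∑ j ∈ Finset.range n, (P n (j + 1) - P n j) * h (P n (j + 1)) := by
      rw [hI n]
      apply Finset.sum_le_sum
      intro j hj
      exact hupp _ _ (hPmem n j) (hPmem n (j + 1)) (hPadj n j (Finset.mem_range.mp hj))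
    have huppS : ∑ j ∈ Finset.range n, (P n (j + 1) - P n j) * h (P n (j + 1))
        ≤ (∫ x in (P n 0)..1, h x) + ε' * (h 1 - h (P n 0)) := by
      rw [hI n]
      have hts : ε' * (h 1 - h (P n 0))
          = ∑ j ∈ Finset.range n, ε' * (h (P n (j + 1)) - h (P n j)) := by
        rw [← Finset.mul_sum, Finset.sum_range_sub (fun j => h (P n j)), hPn n]
      rw [hts, ← Finset.sum_add_distrib]
      apply Finset.sum_le_sum
      intro j hj
      have hj' := Finset.mem_range.mp hj
      have hab := hPadj n j hj'
      have hmle : h (P n j) ≤ h (P n (j + 1)) := hmono (hPmem n j) (hPmem n (j + 1)) hab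
      have hint2 := hlow _ _ (hPmem n j) (hPmem n (j + 1)) hab
      have hm := (hmesh j hj').le
      nlinarith [sub_nonneg.mpr hab]
    have hIdiff : (∫ x in (0:ℝ)..1, h x)
        = (∫ x in (0:ℝ)..(P n 0), h x) + ∫ x in (P n 0)..1, h x :=
      (intervalIntegral.integral_add_adjacent_intervals
        (hintg 0 (P n 0) h0mem (hPmem n 0)) (hintg (P n 0) 1 (hPmem n 0) h1mem)).symm
    have htail_le : ∫ x in (0:ℝ)..(P n 0), h x ≤ P n 0 * h 1 := by
      have h1 := hupp 0 (P n 0) h0mem (hPmem n 0) (hPpos n 0).le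
      have h2 : h (P n 0) ≤ h 1 := hmono (hPmem n 0) h1mem (hPle1 n 0)
      nlinarith [(hPpos n 0).le]
    have htail_nn : 0 ≤ ∫ x in (0:ℝ)..(P n 0), h x := by
      have h1 := hlow 0 (P n 0) h0mem (hPmem n 0) (hPpos n 0).le
      have h2 : 0 ≤ h 0 := hnn 0 h0mem
      nlinarith [(hPpos n 0).le]
    have hε'h1 : ε' * h 1 < ε / 2 := by
      rw [hε'def, div_mul_eq_mul_div, div_lt_div_iff₀ (by positivity) two_pos]
      nlinarith
    have hPh1 : P n 0 * h 1 ≤ ε' * h 1 := mul_le_mul_of_nonneg_right hn2.le h1nn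
    have hhP0 : 0 ≤ h (P n 0) := hnn _ (hPmem n 0)
    have hexp : ε' * (h 1 - h (P n 0)) = ε' * h 1 - ε' * h (P n 0) := by ring
    have hεhP0 : 0 ≤ ε' * h (P n 0) := mul_nonneg hε'.le hhP0
    rw [Real.dist_eq, abs_lt]
    constructor <;> [linarith; linarith]
  exact Tendsto.congr (fun n => (hsum n).symm) main
end
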